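/- arXiv:1809.00389 — 8 statements merged into one kernel-verified Lean document; each statement's English description precedes it below -/
import Mathlib

section
/- Let Θ be a real antisymmetric n×n matrix and R a real symmetric positive semi-definite n×n matrix. Then every complex eigenvalue of the matrix A := 2ΘR is purely imaginary (has zero real part). In particular, A is isospectral to the real antisymmetric matrix 2√R Θ √R, where √R denotes the positive semi-definite square root of R. -/
/-!
Write `S = √R`. Then `A = (2ΘS)S` while `2SΘS = S(2ΘS)`, and `XY`, `YX` have the same
characteristic polynomial, hence the same spectrum; this needs no invertibility of `R`. The matrix
`2SΘS` is real antisymmetric, so `i` times it is Hermitian and has real spectrum.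
-/

open Matrix

/-- The positive semi-definite square root, as `Matrix.PosSemidef.sqrt` was defined in the
older Mathlib (removed since). -/
noncomputable def Matrix.PosSemidef.sqrt {m 𝕜 : Type*} [Fintype m] [DecidableEq m] [RCLike 𝕜]
    [PartialOrder 𝕜] {M : Matrix m m 𝕜} (hM : M.PosSemidef) : Matrix m m 𝕜 :=
  hM.1.eigenvectorUnitary.1 * diagonal ((↑) ∘ Real.sqrt ∘ hM.1.eigenvalues) *
    (star hM.1.eigenvectorUnitary : Matrix m m 𝕜)

namespace Matrix

namespace PosSemidef

section

variable {m 𝕜 : Type*} [Fintype m] [DecidableEq m] [RCLike 𝕜] [PartialOrder 𝕜]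
  {M : Matrix m m 𝕜}

theorem sqrt_eq_cfc (hM : M.PosSemidef) : hM.sqrt = cfc Real.sqrt M :=
  (hM.1.cfc_eq _).symm

theorem isHermitian_sqrt (hM : M.PosSemidef) : hM.sqrt.IsHermitian :=
  hM.sqrt_eq_cfc ▸ cfc_predicate Real.sqrt M

end

-- Under an arbitrary `PartialOrder 𝕜`, `PosSemidef` need not force nonnegative eigenvalues.
open scoped ComplexOrder in
theorem sqrt_mul_self {m 𝕜 : Type*} [Fintype m] [DecidableEq m] [RCLike 𝕜]
    {M : Matrix m m 𝕜} (hM : M.PosSemidef) : hM.sqrt * hM.sqrt = M := by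
  rw [sqrt_eq_cfc, ← cfc_mul Real.sqrt Real.sqrt M]
  conv_rhs => rw [← cfc_id ℝ M hM.1.isSelfAdjoint]
  refine cfc_congr fun x hx => ?_
  rw [hM.1.spectrum_real_eq_range_eigenvalues] at hx
  obtain ⟨i, rfl⟩ := hx
  exact Real.mul_self_sqrt (hM.eigenvalues_nonneg i)

end PosSemidef

theorem spectrum_mul_comm {n R : Type*} [Fintype n] [DecidableEq n] [CommRing R]
    (A B : Matrix n n R) :
    spectrum R (A * B) = spectrum R (B * A) := by
  ext r
  simp only [mem_spectrum_iff_not_isUnit_eval_charpoly, charpoly_mul_comm]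

theorem spectrum_map_mul_comm {n R K : Type*} [Fintype n] [DecidableEq n] [CommRing R]
    [CommRing K] (f : R →+* K) (A B : Matrix n n R) :
    spectrum K ((A * B).map f) = spectrum K ((B * A).map f) := by
  rw [Matrix.map_mul, Matrix.map_mul, spectrum_mul_comm]

theorem conjTranspose_map_ofReal {m n : Type*} (B : Matrix m n ℝ) :
    (B.map (Complex.ofReal · : ℝ → ℂ))ᴴ = Bᵀ.map (Complex.ofReal · : ℝ → ℂ) := by
  ext i j
  simp

theorem re_eq_zero_of_mem_spectrum_of_conjTranspose_eq_neg {n : Type*} [Fintype n]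
    [DecidableEq n] {H : Matrix n n ℂ} (hH : Hᴴ = -H) {μ : ℂ} (hμ : μ ∈ spectrum ℂ H) :
    μ.re = 0 := by
  have hIH : (Complex.I • H).IsHermitian := by
    rw [IsHermitian, conjTranspose_smul, hH]
    simp
  have hIμ : Complex.I * μ ∈ spectrum ℂ (Complex.I • H) := by
    simpa using (spectrum.smul_mem_smul_iff (r := Units.mk0 Complex.I Complex.I_ne_zero)).mpr hμ
  rw [hIH.spectrum_eq_image_range] at hIμ
  obtain ⟨x, -, hx⟩ := hIμ
  simpa using congrArg Complex.im hx.symm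

end Matrix

/-- For a real antisymmetric `Θ` and a real symmetric positive semi-definite
`R`, every complex eigenvalue of `A := 2ΘR` is purely imaginary; moreover `A` is isospectral
to the real antisymmetric matrix `2√R Θ √R`, where `√R` is the positive semi-definite
square root of `R`. -/
theorem eigenvalues_purely_imaginary_of_two_theta_R {n : ℕ}
    (Θ R A : Matrix (Fin n) (Fin n) ℝ)
    (hΘ : Θᵀ = -Θ) (hR : R.PosSemidef)
    (hA : A = (2 : ℝ) • (Θ * R)) :
    (∀ μ ∈ spectrum ℂ (A.map (Complex.ofReal · : ℝ → ℂ)), μ.re = 0)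
    ∧ spectrum ℂ (A.map (Complex.ofReal · : ℝ → ℂ))
      = spectrum ℂ ((((2 : ℝ) • (hR.sqrt * Θ * hR.sqrt)).map (Complex.ofReal · : ℝ → ℂ))) := by
  set S := hR.sqrt
  have hS : Sᵀ = S := by simpa using hR.isHermitian_sqrt.eq
  have hspec : spectrum ℂ (A.map (Complex.ofReal · : ℝ → ℂ))
      = spectrum ℂ ((((2 : ℝ) • (S * Θ * S)).map (Complex.ofReal · : ℝ → ℂ))) := by
    have hAS : A = ((2 : ℝ) • (Θ * S)) * S := by
      rw [hA, smul_mul_assoc, mul_assoc, hR.sqrt_mul_self]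
    have hSΘS : (2 : ℝ) • (S * Θ * S) = S * ((2 : ℝ) • (Θ * S)) := by
      rw [mul_smul_comm, mul_assoc]
    rw [hAS, hSΘS]
    exact spectrum_map_mul_comm Complex.ofRealHom _ _
  refine ⟨fun μ hμ ↦
    re_eq_zero_of_mem_spectrum_of_conjTranspose_eq_neg ?_ (hspec ▸ hμ), hspec⟩
  rw [conjTranspose_map_ofReal, transpose_smul, transpose_mul, transpose_mul, hS, hΘ]
  ext i j
  simp [mul_assoc]
end

section
/- Let α be a Hurwitz real n×n matrix and β a real symmetric positive definite n×n matrix. Then 𝐋(α, 𝐋(α, β)) ⪯ 𝐫(𝐋(α, β) β^{-1}) · 𝐋(α, β), where 𝐫(·) is the spectral radius and ⪯ is the Loewner (positive semi-definite) partial order. -/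
/-!
Write `γ = 𝐋(α, β)` and `r = 𝐫(γ β⁻¹)`. With `S = β^{1/2}`, the matrix `γ β⁻¹ = S (S⁻¹ γ S⁻¹) S⁻¹`
is similar to the symmetric matrix `S⁻¹ γ S⁻¹`, whose eigenvalues are therefore at most `r`; hence
`S⁻¹ γ S⁻¹ ⪯ r`, and conjugating by `S` gives `γ ⪯ r β`. The map `𝐋(α, ·)` is linear and monotone
for the Loewner order, so `𝐋(α, γ) ⪯ 𝐋(α, r β) = r γ`; the integrand defining `𝐋(α, γ)` is
integrable because it lies between `0` and `r` times that of `𝐋(α, β)`. When the latter is not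
integrable, the Bochner integral `𝐋(α, β)` is `0` and the inequality is trivial.
-/

open Matrix MeasureTheory

attribute [local instance] Matrix.normedAddCommGroup Matrix.normedSpace

/-- A real square matrix is Hurwitz if all its complex eigenvalues have negative real part. -/
def Hurwitz {m : Type*} [Fintype m] [DecidableEq m] (M : Matrix m m ℝ) : Prop :=
  ∀ μ ∈ spectrum ℂ (M.map (Complex.ofReal · : ℝ → ℂ)), μ.re < 0

/-- `lyap α β := ∫₀^∞ e^{tα} β e^{tαᵀ} dt`, the solution of the algebraic Lyapunov
equation `αγ + γαᵀ + β = 0` when `α` is Hurwitz. -/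
noncomputable def lyap {m : Type*} [Fintype m] [DecidableEq m]
    (α β : Matrix m m ℝ) : Matrix m m ℝ :=
  ∫ t in Set.Ioi (0:ℝ), NormedSpace.exp (t • α) * β * NormedSpace.exp (t • αᵀ)

/-- Spectral radius of a real square matrix: the largest modulus of a complex eigenvalue. -/
noncomputable def specRad {m : Type*} [Fintype m] [DecidableEq m] (M : Matrix m m ℝ) : ℝ :=
  sSup ((‖·‖ : ℂ → ℝ) '' spectrum ℂ (M.map (Complex.ofReal · : ℝ → ℂ)))

open scoped MatrixOrder

/- The normed structure on matrices induces the product topology only up to unfolding, so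
instance search cannot find these two instances through it. -/
instance Matrix.instContinuousENorm {m n : Type*} [Fintype m] [Fintype n] :
    ContinuousENorm (Matrix m n ℝ) :=
  SeminormedAddGroup.toContinuousENorm

instance Matrix.instPseudoMetrizableSpace {m n : Type*} [Fintype m] [Fintype n] :
    TopologicalSpace.PseudoMetrizableSpace (Matrix m n ℝ) :=
  inferInstanceAs (TopologicalSpace.PseudoMetrizableSpace (m → n → ℝ))

section Spectrum

variable {m : Type*} [Fintype m] [DecidableEq m]

lemma mem_spectrum_map_ofReal_iff {N : Matrix m m ℝ} {z : ℂ} :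
    z ∈ spectrum ℂ (N.map (Complex.ofReal · : ℝ → ℂ)) ↔
      (N.charpoly.map Complex.ofRealHom).IsRoot z := by
  rw [mem_spectrum_iff_isRoot_charpoly, ← charpoly_map]
  rfl

lemma abs_le_specRad {N : Matrix m m ℝ} {x : ℝ} (hx : x ∈ spectrum ℝ N) : |x| ≤ specRad N := by
  rw [mem_spectrum_iff_isRoot_charpoly] at hx
  have hmem : ‖(x : ℂ)‖ ∈ (‖·‖ : ℂ → ℝ) '' spectrum ℂ (N.map (Complex.ofReal · : ℝ → ℂ)) :=
    ⟨_, mem_spectrum_map_ofReal_iff.2 hx.map, rfl⟩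
  rw [← Real.norm_eq_abs, ← Complex.norm_real]
  exact le_csSup ((finite_spectrum _).image _).bddAbove hmem

lemma specRad_mul_comm (A B : Matrix m m ℝ) : specRad (A * B) = specRad (B * A) := by
  simp_rw [specRad, Set.ext_iff.2 fun _ => mem_spectrum_map_ofReal_iff, charpoly_mul_comm]

lemma le_specRad_mul_inv_smul {β γ : Matrix m m ℝ} (hβ : β.PosDef) (hγ : γ.IsHermitian) :
    γ ≤ specRad (γ * β⁻¹) • β := by
  set S := CFC.sqrt β
  have hS : IsUnit S.det := by
    rw [← isUnit_iff_isUnit_det]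
    exact CFC.isUnit_sqrt_iff_isStrictlyPositive.2 hβ.isStrictlyPositive
  have hSS : S * S = β := CFC.sqrt_mul_sqrt_self β hβ.posSemidef.nonneg
  have hS_sa : IsSelfAdjoint S := (CFC.sqrt_nonneg β).isSelfAdjoint
  have hSinv_sa : IsSelfAdjoint S⁻¹ := by
    rw [IsSelfAdjoint, star_eq_conjTranspose, conjTranspose_nonsing_inv, ← star_eq_conjTranspose,
      hS_sa.star_eq]
  set M := S⁻¹ * γ * S⁻¹
  have hM : IsSelfAdjoint M := by
    simpa only [hSinv_sa.star_eq] using hγ.isSelfAdjoint.conjugate' S⁻¹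
  have hr : specRad (γ * β⁻¹) = specRad M := by
    rw [← hSS, Matrix.mul_inv_rev, ← Matrix.mul_assoc, specRad_mul_comm, ← Matrix.mul_assoc]
  have hM_le : M ≤ algebraMap ℝ _ (specRad M) :=
    (le_algebraMap_iff_spectrum_le hM).2 fun x hx => (le_abs_self x).trans (abs_le_specRad hx)
  calc γ = S * M * S := by
        rw [← Matrix.mul_assoc, ← Matrix.mul_assoc, mul_nonsing_inv _ hS, Matrix.one_mul,
          Matrix.mul_assoc, nonsing_inv_mul _ hS, Matrix.mul_one]
    _ ≤ S * algebraMap ℝ _ (specRad M) * S := hS_sa.conjugate_le_conjugate hM_le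
    _ = specRad (γ * β⁻¹) • β := by
        rw [hr, Algebra.algebraMap_eq_smul_one, Matrix.mul_smul, Matrix.mul_one, Matrix.smul_mul,
          hSS]

end Spectrum

section Loewner

variable {m : Type*} [Fintype m]

lemma Matrix.PosSemidef.abs_apply_le {A : Matrix m m ℝ} (hA : A.PosSemidef)
    (i j : m) : |A i j| ≤ (A i i + A j j) / 2 := by
  classical
  have hsymm : A j i = A i j := hA.isHermitian.apply i j
  have hplus := hA.dotProduct_mulVec_nonneg (Pi.single i 1 + Pi.single j 1)
  have hminus := hA.dotProduct_mulVec_nonneg (Pi.single i 1 - Pi.single j 1)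
  simp only [star_trivial, mulVec_add, mulVec_sub, mulVec_single, MulOpposite.op_one, one_smul,
    dotProduct_add, dotProduct_sub, add_dotProduct, sub_dotProduct, single_dotProduct, col_apply,
    one_mul, hsymm] at hplus hminus
  rw [abs_le]
  constructor <;> linarith

lemma Matrix.norm_le_norm_of_nonneg_of_le {A B : Matrix m m ℝ} (hA : 0 ≤ A) (hAB : A ≤ B) :
    ‖A‖ ≤ ‖B‖ := by
  refine (norm_le_iff (norm_nonneg B)).2 fun i j => ?_
  have hdiag k : A k k ≤ ‖B‖ := by
    have hk := (le_iff.1 hAB).diag_nonneg (i := k)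
    rw [sub_apply, sub_nonneg] at hk
    exact hk.trans ((le_abs_self _).trans B.norm_entry_le_entrywise_sup_norm)
  rw [Real.norm_eq_abs]
  linarith [hA.posSemidef.abs_apply_le i j, hdiag i, hdiag j]

lemma Matrix.PosSemidef.integral {X : Type*} [MeasurableSpace X] {μ : Measure X}
    {f : X → Matrix m m ℝ} (hf : ∀ x, (f x).PosSemidef) : (∫ x, f x ∂μ).PosSemidef := by
  by_cases hint : Integrable f μ
  swap
  · rw [integral_undef hint]
    exact .zero
  refine .of_dotProduct_mulVec_nonneg ?_ fun v => ?_
  · let T : Matrix m m ℝ ≃L[ℝ] Matrix m m ℝ :=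
      (transposeLinearEquiv m m ℝ ℝ).toContinuousLinearEquiv
    have hT : ∫ x, (f x)ᵀ ∂μ = (∫ x, f x ∂μ)ᵀ := T.integral_comp_comm f
    rw [IsHermitian, conjTranspose_eq_transpose_of_trivial, ← hT]
    exact integral_congr_ae (ae_of_all _ fun x => by
      simpa [conjTranspose_eq_transpose_of_trivial] using (hf x).isHermitian.eq)
  · let q : Matrix m m ℝ →L[ℝ] ℝ := LinearMap.toContinuousLinearMap
      { toFun := fun A => star v ⬝ᵥ A *ᵥ v
        map_add' := fun A B => by simp only [add_mulVec, dotProduct_add]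
        map_smul' := fun c A => by simp only [smul_mulVec, dotProduct_smul, RingHom.id_apply] }
    have hq : ∫ x, star v ⬝ᵥ f x *ᵥ v ∂μ = star v ⬝ᵥ (∫ x, f x ∂μ) *ᵥ v :=
      q.integral_comp_comm hint
    rw [← hq]
    exact integral_nonneg fun x => (hf x).dotProduct_mulVec_nonneg v

end Loewner

section Lyapunov

variable {m : Type*} [Fintype m] [DecidableEq m] (α : Matrix m m ℝ)

noncomputable def lyapIntegrand (β : Matrix m m ℝ) (t : ℝ) : Matrix m m ℝ :=
  NormedSpace.exp (t • α) * β * NormedSpace.exp (t • αᵀ)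

lemma lyap_eq_integral_lyapIntegrand (β : Matrix m m ℝ) :
    lyap α β = ∫ t in Set.Ioi 0, lyapIntegrand α β t :=
  rfl

lemma lyapIntegrand_eq_mul_mul_star (β : Matrix m m ℝ) (t : ℝ) :
    lyapIntegrand α β t = NormedSpace.exp (t • α) * β * star (NormedSpace.exp (t • α)) := by
  rw [lyapIntegrand, star_eq_conjTranspose, conjTranspose_eq_transpose_of_trivial,
    ← exp_transpose, transpose_smul]

lemma continuous_lyapIntegrand (β : Matrix m m ℝ) : Continuous (lyapIntegrand α β) := by
  open scoped Matrix.Norms.Operator in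
  have hexp (a : Matrix m m ℝ) : Continuous fun t : ℝ => NormedSpace.exp (t • a) :=
    NormedSpace.exp_continuous.comp (continuous_id.smul continuous_const)
  exact ((hexp α).mul continuous_const).mul (hexp αᵀ)

lemma lyapIntegrand_nonneg {β : Matrix m m ℝ} (hβ : 0 ≤ β) (t : ℝ) :
    0 ≤ lyapIntegrand α β t := by
  rw [lyapIntegrand_eq_mul_mul_star]
  exact star_right_conjugate_nonneg hβ _

lemma lyapIntegrand_mono {δ β : Matrix m m ℝ} (h : δ ≤ β) (t : ℝ) :
    lyapIntegrand α δ t ≤ lyapIntegrand α β t := by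
  simp only [lyapIntegrand_eq_mul_mul_star]
  exact star_right_conjugate_le_conjugate h _

lemma lyapIntegrand_smul (r : ℝ) (β : Matrix m m ℝ) :
    lyapIntegrand α (r • β) = r • lyapIntegrand α β := by
  ext1 t
  simp only [lyapIntegrand, Pi.smul_apply, Matrix.mul_smul, Matrix.smul_mul]

lemma lyapIntegrand_sub (β δ : Matrix m m ℝ) :
    lyapIntegrand α (β - δ) = lyapIntegrand α β - lyapIntegrand α δ := by
  ext1 t
  simp only [lyapIntegrand, Pi.sub_apply, Matrix.mul_sub, Matrix.sub_mul]

lemma lyap_nonneg {β : Matrix m m ℝ} (hβ : 0 ≤ β) : 0 ≤ lyap α β :=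
  (PosSemidef.integral fun t => (lyapIntegrand_nonneg α hβ t).posSemidef).nonneg

lemma lyap_zero : lyap α 0 = 0 := by
  simp only [lyap, Matrix.mul_zero, Matrix.zero_mul, integral_zero]

lemma lyap_smul (r : ℝ) (β : Matrix m m ℝ) : lyap α (r • β) = r • lyap α β := by
  simp only [lyap_eq_integral_lyapIntegrand, lyapIntegrand_smul, Pi.smul_apply, integral_smul]

lemma lyap_mono {δ β : Matrix m m ℝ} (hδ : 0 ≤ δ) (h : δ ≤ β)
    (hβ : IntegrableOn (lyapIntegrand α β) (Set.Ioi 0)) : lyap α δ ≤ lyap α β := by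
  have hδ_int : IntegrableOn (lyapIntegrand α δ) (Set.Ioi 0) :=
    Integrable.mono hβ (continuous_lyapIntegrand α δ).aestronglyMeasurable (ae_of_all _ fun t =>
      norm_le_norm_of_nonneg_of_le (lyapIntegrand_nonneg α hδ t) (lyapIntegrand_mono α h t))
  have hsub : lyap α (β - δ) = lyap α β - lyap α δ := by
    simp only [lyap_eq_integral_lyapIntegrand, lyapIntegrand_sub, Pi.sub_apply,
      integral_sub hβ hδ_int]
  rw [← sub_nonneg, ← hsub]
  exact lyap_nonneg α (sub_nonneg.2 h)

end Lyapunov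

theorem lyap_iterate_bound_general {n : ℕ} (α β : Matrix (Fin n) (Fin n) ℝ)
    (hβ : β.PosDef) :
    (specRad (lyap α β * β⁻¹) • lyap α β - lyap α (lyap α β)).PosSemidef := by
  rw [← le_iff]
  set γ := lyap α β
  by_cases hβ_int : IntegrableOn (lyapIntegrand α β) (Set.Ioi 0)
  · have hγ : 0 ≤ γ := lyap_nonneg α hβ.posSemidef.nonneg
    set r := specRad (γ * β⁻¹)
    have hγβ : γ ≤ r • β := le_specRad_mul_inv_smul hβ hγ.posSemidef.isHermitian
    have hrβ_int : IntegrableOn (lyapIntegrand α (r • β)) (Set.Ioi 0) := by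
      rw [lyapIntegrand_smul]
      exact hβ_int.smul r
    calc lyap α γ ≤ lyap α (r • β) := lyap_mono α hγ hγβ hrβ_int
      _ = r • γ := lyap_smul α r β
  · have hγ : γ = 0 := integral_undef hβ_int
    rw [hγ, lyap_zero, smul_zero]

/-- For Hurwitz `α` and real symmetric positive definite `β`,
`𝐋(α, 𝐋(α, β)) ⪯ 𝐫(𝐋(α, β) β⁻¹) · 𝐋(α, β)` in the Loewner order. -/
theorem lyap_iterate_bound {n : ℕ} (α β : Matrix (Fin n) (Fin n) ℝ)
    (hα : Hurwitz α) (hβ : β.PosDef) :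
    (specRad (lyap α β * β⁻¹) • lyap α β - lyap α (lyap α β)).PosSemidef :=
  lyap_iterate_bound_general α β hβ
end

section
/- Let A be a real n×n matrix which is diagonalizable as A = iVΩW, where V ∈ ℂ^{n×n} is invertible, W := V^{-1}, and Ω = diag(ω₁, …, ω_n) with real ω₁, …, ω_n. Let Γ ∈ ℂ^{n×n} and τ > 0. Then (1/τ) ∫₀^{+∞} e^{-t/τ} e^{tA} Γ e^{tAᵀ} dt = V (Φ_τ ⊙ (W Γ W*)) V*, where Φ_τ := (χ_τ(ω_j − ω_k))_{1≤j,k≤n} with χ_τ(u) := 1/(1 − iuτ), ⊙ denotes the Hadamard (entrywise) product, and (·)* denotes the complex conjugate transpose. -/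
open Matrix MeasureTheory

attribute [local instance] Matrix.normedAddCommGroup Matrix.normedSpace

/-!
Since `A` is real, `e^{tAᵀ}` is the conjugate transpose of `e^{tA} = V e^{itΩ} W`, so the integrand
is `V (K_t ⊙ WΓW*) V*` with `K_t(j, k) = e^{-t/τ} e^{i(ω_j - ω_k)t}`. The map `X ↦ V (X ⊙ WΓW*) V*`
is linear, so the integral may be taken entrywise in `K_t`, and
`(1/τ) ∫₀^∞ e^{(iu - 1/τ)t} dt = 1/(1 - iuτ)`.
-/

open Complex in
theorem re_I_mul_sub_inv_neg {τ : ℝ} (hτ : 0 < τ) (u : ℝ) : (I * u - 1 / τ : ℂ).re < 0 := by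
  simpa [← ofReal_one, ← ofReal_div] using hτ

open Complex in
theorem integral_Ioi_exp_I_mul_sub_inv {τ : ℝ} (hτ : 0 < τ) (u : ℝ) :
    (1 / τ : ℂ) * ∫ t in Set.Ioi (0 : ℝ), exp ((I * u - 1 / τ) * t) = 1 / (1 - I * u * τ) := by
  have hτ' : (τ : ℂ) ≠ 0 := ofReal_ne_zero.mpr hτ.ne'
  have hne : 1 - I * u * τ ≠ 0 := fun h => by simpa using congrArg re h
  rw [integral_exp_mul_complex_Ioi (re_I_mul_sub_inv_neg hτ u), ofReal_zero, mul_zero, exp_zero]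
  field_simp
  rw [← div_neg, neg_sub]

namespace Matrix

variable {n : Type*} [Fintype n]

section Hadamard

variable {𝕜 : Type*} [RCLike 𝕜]

theorem diagonal_mul_mul_diagonal [DecidableEq n] {R : Type*} [CommSemiring R] (d e : n → R)
    (M : Matrix n n R) : diagonal d * M * diagonal e = of (fun j k => d j * e k) ⊙ M := by
  ext j k
  simp [diagonal_mul, mul_diagonal, mul_right_comm]

theorem conj_diagonal_mul_conjTranspose [DecidableEq n] (V W M : Matrix n n 𝕜) (d : n → 𝕜) :
    V * diagonal d * W * M * (V * diagonal d * W)ᴴ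
      = V * (of (fun j k => d j * star (d k)) ⊙ (W * M * Wᴴ)) * Vᴴ := by
  rw [conjTranspose_mul, conjTranspose_mul, diagonal_conjTranspose, ← diagonal_mul_mul_diagonal]
  simp only [Matrix.mul_assoc]
  rfl

variable {X : Type*} [MeasurableSpace X] {μ : Measure X}

-- `f` takes values in `n → n → 𝕜` rather than `Matrix n n 𝕜`: the topology of the sup-norm
-- instance on matrices is not reducibly the matrix topology, so `Integrable` would not elaborate.
theorem integral_mul_hadamard_mul {f : X → n → n → 𝕜}
    (hf : ∀ j k, Integrable (fun x => f x j k) μ) (U M W : Matrix n n 𝕜) :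
    ∫ x, U * (of (f x) ⊙ M) * W ∂μ = U * (of (fun j k => ∫ x, f x j k ∂μ) ⊙ M) * W := by
  let L : (n → n → 𝕜) →L[𝕜] Matrix n n 𝕜 := LinearMap.toContinuousLinearMap
    { toFun := fun F => U * (of F ⊙ M) * W
      map_add' := fun F G => by rw [← of_add_of, add_hadamard, mul_add, add_mul]
      map_smul' := fun c F => by
        rw [← smul_of, smul_hadamard, Matrix.mul_smul, Matrix.smul_mul, RingHom.id_apply] }
  have hentry : ∫ x, f x ∂μ = fun j k => ∫ x, f x j k ∂μ := by
    ext j k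
    rw [eval_integral (fun j => Integrable.of_eval (hf j)), eval_integral (hf j)]
  exact (L.integral_comp_comm (Integrable.of_eval fun j => Integrable.of_eval (hf j))).trans
    (congrArg L hentry)

end Hadamard

section Exponential

variable [DecidableEq n]

-- The operator norm supplies the normed-ring structure that `NormedSpace.map_exp` needs.
open scoped Norms.Operator in
theorem map_ofReal_exp (X : Matrix n n ℝ) :
    (NormedSpace.exp X).map ((↑) : ℝ → ℂ) = NormedSpace.exp (X.map ((↑) : ℝ → ℂ)) :=
  NormedSpace.map_exp Complex.ofRealHom.mapMatrix
    (continuous_id.matrix_map Complex.continuous_ofReal) X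

theorem map_ofReal_exp_transpose (X : Matrix n n ℝ) :
    (NormedSpace.exp Xᵀ).map ((↑) : ℝ → ℂ) = ((NormedSpace.exp X).map ((↑) : ℝ → ℂ))ᴴ := by
  rw [exp_transpose]
  ext
  simp

theorem map_ofReal_exp_smul_of_eq_conj_diagonal {A : Matrix n n ℝ} {V : Matrix n n ℂ}
    (hV : IsUnit V) {d : n → ℂ} (hA : A.map ((↑) : ℝ → ℂ) = V * diagonal d * V⁻¹) (t : ℝ) :
    (NormedSpace.exp (t • A)).map ((↑) : ℝ → ℂ)
      = V * diagonal (fun k => Complex.exp (t * d k)) * V⁻¹ := by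
  have hsmul : (t • A).map ((↑) : ℝ → ℂ) = V * diagonal ((t : ℂ) • d) * V⁻¹ := by
    rw [map_smul' _ _ _ (fun _ _ => Complex.ofReal_mul _ _), hA, diagonal_smul,
      Matrix.mul_smul, Matrix.smul_mul]
  rw [map_ofReal_exp, hsmul, exp_conj _ _ hV, exp_diagonal, Pi.exp_def]
  simp [Complex.exp_eq_exp_ℂ]

end Exponential

end Matrix

open Complex in
theorem exp_neg_div_smul_exp_mul_star_exp (τ t a b : ℝ) :
    Real.exp (-t / τ) • (exp (t * (I * a)) * star (exp (t * (I * b))))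
      = exp ((I * (a - b : ℝ) - 1 / τ) * t) := by
  rw [real_smul, ofReal_exp, star_def, ← exp_conj, ← exp_add, ← exp_add]
  congr 1
  simp only [map_mul, conj_ofReal, conj_I]
  push_cast
  ring

/-- If the real matrix `A` is diagonalized as `A = iVΩW` with `W = V⁻¹`
and real frequencies `ω₁, …, ω_n`, then for any complex `Γ` and `τ > 0`,
`(1/τ)∫₀^∞ e^{-t/τ} e^{tA} Γ e^{tAᵀ} dt = V (Φ_τ ⊙ (WΓW*)) V*`, where
`Φ_τ = (χ_τ(ω_j − ω_k))` with `χ_τ(u) = 1/(1 − iuτ)` and `⊙` the Hadamard product. -/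
theorem discounted_second_moments_freq_domain {n : ℕ}
    (A : Matrix (Fin n) (Fin n) ℝ) (V W : Matrix (Fin n) (Fin n) ℂ)
    (hV : IsUnit V.det) (hW : W = V⁻¹) (ω : Fin n → ℝ)
    (hA : A.map (Complex.ofReal · : ℝ → ℂ)
      = Complex.I • (V * Matrix.diagonal (fun k => (ω k : ℂ)) * W))
    (Γ : Matrix (Fin n) (Fin n) ℂ) (τ : ℝ) (hτ : 0 < τ) :
    ((1 / τ) • ∫ t in Set.Ioi (0:ℝ), Real.exp (-t / τ) •
        ((NormedSpace.exp (t • A)).map (Complex.ofReal · : ℝ → ℂ) * Γ *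
          (NormedSpace.exp (t • Aᵀ)).map (Complex.ofReal · : ℝ → ℂ)))
      = V * (Matrix.hadamard
          (Matrix.of fun j k => 1 / (1 - Complex.I * ((ω j : ℂ) - (ω k : ℂ)) * (τ : ℂ)))
          (W * Γ * Wᴴ)) * Vᴴ := by
  subst hW
  have hA' : A.map (↑) = V * diagonal (fun k => Complex.I * ω k) * V⁻¹ := by
    rw [hA, ← Matrix.smul_mul, ← Matrix.mul_smul, ← diagonal_smul]
    rfl
  have hexp := map_ofReal_exp_smul_of_eq_conj_diagonal ((isUnit_iff_isUnit_det V).mpr hV) hA'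
  have integrand (t : ℝ) : Real.exp (-t / τ) •
      ((NormedSpace.exp (t • A)).map (Complex.ofReal · : ℝ → ℂ) * Γ *
        (NormedSpace.exp (t • Aᵀ)).map (Complex.ofReal · : ℝ → ℂ))
      = V * (of (fun j k => Complex.exp ((Complex.I * (ω j - ω k : ℝ) - 1 / τ) * t))
          ⊙ (V⁻¹ * Γ * V⁻¹ᴴ)) * Vᴴ := by
    rw [← transpose_smul, map_ofReal_exp_transpose, hexp, conj_diagonal_mul_conjTranspose,
      ← Matrix.smul_mul, ← Matrix.mul_smul, ← smul_hadamard, smul_of]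
    simp only [Pi.smul_def, exp_neg_div_smul_exp_mul_star_exp]
  rw [integral_congr_ae (ae_of_all _ integrand), integral_mul_hadamard_mul
      (fun j k => integrableOn_exp_mul_complex_Ioi (re_I_mul_sub_inv_neg hτ _) 0),
    ← Matrix.smul_mul, ← Matrix.mul_smul, ← smul_hadamard, smul_of]
  congr 3
  ext j k
  rw [of_apply, of_apply, Pi.smul_apply, Pi.smul_apply, Complex.real_smul, Complex.ofReal_div,
    Complex.ofReal_one, integral_Ioi_exp_I_mul_sub_inv hτ, Complex.ofReal_sub]
end

section
/- Let A be a real n×n matrix diagonalizable as A = iVΩW, where V ∈ ℂ^{n×n} is invertible, W := V^{-1}, and Ω = diag(ω₁, …, ω_n) with real ω₁, …, ω_n. Let Γ ∈ ℂ^{n×n}. Then lim_{τ→+∞} (1/τ) ∫₀^{+∞} e^{-t/τ} e^{tA} Γ e^{tAᵀ} dt = V (Φ_∞ ⊙ (W Γ W*)) V*, where Φ_∞ := (δ_{ω_j ω_k})_{1≤j,k≤n} is the binary matrix with (j,k) entry equal to 1 if ω_j = ω_k and 0 otherwise, and ⊙ is the Hadamard product. In particular, if ω₁, …, ω_n are pairwise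 distinct, then Φ_∞ = Iₙ and the limit equals V (diag entries of W Γ W*) V* = Σ_{k=1}^n V_k W_k Γ W_k* V_k*, where V_k is the k-th column of V and W_k the k-th row of W. -/
/-!
In the eigenbasis of `A` the dynamics is a pure rotation: with `M = WΓW*`,
`e^{tA} Γ e^{tAᵀ} = V (Φ(t) ⊙ M) V*` where `Φ(t)_{jk} = e^{i(ω_j - ω_k)t}`.
The discounted average is linear and continuous in the matrix and sends `e^{iut}` to
`χ_τ(u) = 1/(1 - iuτ)`, so at horizon `τ` it equals `V (Φ_τ ⊙ M) V*` with
`Φ_τ = (χ_τ(ω_j - ω_k))`. As `τ → ∞`, `χ_τ(u) → δ_{u0}` entrywise.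
-/

open Matrix MeasureTheory

attribute [local instance] Matrix.normedAddCommGroup Matrix.normedSpace

open Filter Set Topology Complex

/-- The paper's `𝔼_τ`. -/
noncomputable def discountedAverage {E : Type*} [NormedAddCommGroup E] [NormedSpace ℝ E]
    (τ : ℝ) (f : ℝ → E) : E :=
  (1 / τ) • ∫ t in Ioi 0, Real.exp (-t / τ) • f t

section DiscountedAverage

variable {E F : Type*} [NormedAddCommGroup E] [NormedSpace ℝ E] [CompleteSpace E]
  [NormedAddCommGroup F] [NormedSpace ℝ F] [CompleteSpace F] {τ : ℝ}

lemma ContinuousLinearMap.discountedAverage_comp (L : E →L[ℝ] F) {f : ℝ → E}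
    (hf : IntegrableOn (fun t => Real.exp (-t / τ) • f t) (Ioi 0)) :
    discountedAverage τ (fun t => L (f t)) = L (discountedAverage τ f) := by
  simp only [discountedAverage, ← L.map_smul, L.integral_comp_comm hf]

lemma discountedAverage_of {m n : Type*} [Fintype m] [Fintype n] {f : m → n → ℝ → E}
    (hf : ∀ i j, IntegrableOn (fun t => Real.exp (-t / τ) • f i j t) (Ioi 0)) :
    discountedAverage τ (fun t => of fun i j => f i j t)
      = of fun i j => discountedAverage τ (f i j) := by
  ext i j
  have hrow : ∀ i, Integrable (fun t => fun j => Real.exp (-t / τ) • f i j t)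
      (volume.restrict (Ioi 0)) := fun i => Integrable.of_eval (hf i)
  simp only [discountedAverage, Matrix.smul_apply, of_apply]
  congr 1
  change (∫ t in Ioi 0, fun i j => Real.exp (-t / τ) • f i j t) i j = _
  rw [eval_integral hrow, eval_integral (hf i)]

end DiscountedAverage

lemma exp_neg_div_smul_cexp (τ u t : ℝ) :
    Real.exp (-t / τ) • cexp (u * t * I) = cexp ((-(τ : ℂ)⁻¹ + u * I) * t) := by
  rw [real_smul, ofReal_exp, ← Complex.exp_add]
  push_cast
  ring_nf

lemma re_neg_inv_add_mul_I {τ : ℝ} (hτ : 0 < τ) (u : ℝ) : (-(τ : ℂ)⁻¹ + u * I).re < 0 := by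
  simpa using hτ

lemma integrableOn_exp_neg_div_smul_cexp {τ : ℝ} (hτ : 0 < τ) (u : ℝ) :
    IntegrableOn (fun t : ℝ => Real.exp (-t / τ) • cexp (u * t * I)) (Ioi 0) := by
  simp_rw [exp_neg_div_smul_cexp]
  exact integrableOn_exp_mul_complex_Ioi (re_neg_inv_add_mul_I hτ u) 0

lemma discountedAverage_cexp_mul_I {τ : ℝ} (hτ : 0 < τ) (u : ℝ) :
    discountedAverage τ (fun t => cexp (u * t * I)) = 1 / (1 - u * τ * I) := by
  have hτ' : (τ : ℂ) ≠ 0 := by exact_mod_cast hτ.ne'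
  have hden : (1 - u * τ * I : ℂ) ≠ 0 := by
    intro h
    simpa using congrArg re h
  have hc : (-(τ : ℂ)⁻¹ + u * I) = -(1 - u * τ * I) / τ := by
    rw [neg_div, sub_div, one_div, mul_right_comm, mul_div_cancel_right₀ _ hτ']
    ring
  simp_rw [discountedAverage, exp_neg_div_smul_cexp,
    integral_exp_mul_complex_Ioi (re_neg_inv_add_mul_I hτ u), real_smul, hc]
  push_cast
  field_simp
  simp

lemma tendsto_one_div_one_sub_mul_I (u : ℝ) :
    Tendsto (fun τ : ℝ => 1 / (1 - u * τ * I)) atTop (𝓝 (if u = 0 then 1 else 0)) := by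
  split_ifs with hu
  · simp [hu]
  · rw [tendsto_zero_iff_norm_tendsto_zero]
    simp only [norm_div, norm_one]
    refine Tendsto.div_atTop tendsto_const_nhds ?_
    refine tendsto_atTop_mono' _ ?_ (tendsto_id.const_mul_atTop' (abs_pos.2 hu))
    filter_upwards [eventually_ge_atTop 0] with τ hτ
    simpa [abs_mul, abs_of_nonneg hτ] using abs_im_le_norm (1 - u * τ * I)

noncomputable def mulHadamardMulCLM {m : Type*} [Fintype m] (U M U' : Matrix m m ℂ) :
    Matrix m m ℂ →L[ℝ] Matrix m m ℂ :=
  LinearMap.toContinuousLinearMap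
    { toFun := fun X => U * (X ⊙ M) * U'
      map_add' := fun X Y => by simp only [add_hadamard, Matrix.mul_add, Matrix.add_mul]
      map_smul' := fun c X => by
        simp only [smul_hadamard, Matrix.mul_smul, Matrix.smul_mul, RingHom.id_apply] }

lemma mulHadamardMulCLM_apply {m : Type*} [Fintype m] (U M U' X : Matrix m m ℂ) :
    mulHadamardMulCLM U M U' X = U * (X ⊙ M) * U' := rfl

theorem Matrix.map_ofReal_exp_s6 {m : Type*} [Fintype m] [DecidableEq m] (A : Matrix m m ℝ) :
    (NormedSpace.exp A).map ((↑) : ℝ → ℂ) = NormedSpace.exp (A.map (↑)) := by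
  open scoped Matrix.Norms.Operator in
  have : CompleteSpace (Matrix m m ℝ) := FiniteDimensional.complete ℝ _
  exact NormedSpace.map_exp Complex.ofRealHom.mapMatrix
    (continuous_id.matrix_map Complex.continuous_ofReal) A

lemma Matrix.map_ofReal_exp_transpose_s6 {m : Type*} [Fintype m] [DecidableEq m]
    (A : Matrix m m ℝ) :
    (NormedSpace.exp Aᵀ).map ((↑) : ℝ → ℂ) = ((NormedSpace.exp A).map ((↑) : ℝ → ℂ))ᴴ := by
  rw [exp_transpose, ← conjTranspose_eq_transpose_of_trivial,
    conjTranspose_map _ fun x => (conj_ofReal x).symm]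

lemma Matrix.diagonal_mul_mul_diagonal_s6 {m α : Type*} [Fintype m] [DecidableEq m]
    [CommSemiring α] (d e : m → α) (M : Matrix m m α) :
    diagonal d * M * diagonal e = (of fun j k => d j * e k) ⊙ M := by
  ext j k
  simp only [mul_diagonal, diagonal_mul, hadamard_apply, of_apply]
  ring

lemma Matrix.mul_diagonal_mul_eq_sum {m α : Type*} [Fintype m] [DecidableEq m]
    [NonUnitalNonAssocSemiring α] (U W : Matrix m m α) (d : m → α) :
    U * diagonal d * W = ∑ k, of fun i j => U i k * d k * W k j := by
  ext i j
  rw [mul_apply]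
  simp only [mul_diagonal, sum_apply, of_apply]

section Diagonalizable

variable {m : Type*} [Fintype m] [DecidableEq m] {A : Matrix m m ℝ} {V : Matrix m m ℂ}
  {ω : m → ℝ}

lemma map_ofReal_exp_smul_eq (hV : IsUnit V)
    (hA : A.map ((↑) : ℝ → ℂ) = I • (V * diagonal (fun k => (ω k : ℂ)) * V⁻¹)) (t : ℝ) :
    (NormedSpace.exp (t • A)).map ((↑) : ℝ → ℂ)
      = V * diagonal (fun k => cexp (ω k * t * I)) * V⁻¹ := by
  have htA : (t • A).map ((↑) : ℝ → ℂ) = V * diagonal (fun k => ω k * t * I) * V⁻¹ := by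
    rw [Matrix.map_smul' _ _ _ fun _ _ => ofReal_mul _ _, hA, smul_smul,
      ← smul_mul_assoc, ← mul_smul_comm, ← diagonal_smul]
    congr 3
    funext k
    simp only [Pi.smul_apply, smul_eq_mul]
    ring
  rw [Matrix.map_ofReal_exp_s6, htA, exp_conj _ _ hV, exp_diagonal, Pi.exp_def,
    ← Complex.exp_eq_exp_ℂ]

lemma map_ofReal_exp_smul_mul_mul_exp_smul_transpose (hV : IsUnit V)
    (hA : A.map ((↑) : ℝ → ℂ) = I • (V * diagonal (fun k => (ω k : ℂ)) * V⁻¹))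
    (Γ : Matrix m m ℂ) (t : ℝ) :
    (NormedSpace.exp (t • A)).map ((↑) : ℝ → ℂ) * Γ
        * (NormedSpace.exp (t • Aᵀ)).map ((↑) : ℝ → ℂ)
      = V * ((of fun j k => cexp ((ω j - ω k : ℝ) * t * I)) ⊙ (V⁻¹ * Γ * V⁻¹ᴴ)) * Vᴴ := by
  have hstar : star (fun k => cexp (ω k * t * I)) = fun k => cexp (-(ω k * t * I)) := by
    funext k
    simp [← Complex.exp_conj]
  have hΦ : (of fun j k => cexp ((ω j - ω k : ℝ) * t * I))
      = of fun j k => cexp (ω j * t * I) * cexp (-(ω k * t * I)) := by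
    ext j k
    rw [of_apply, of_apply, ← Complex.exp_add]
    push_cast
    ring_nf
  rw [← transpose_smul, map_ofReal_exp_transpose_s6, map_ofReal_exp_smul_eq hV hA,
    conjTranspose_mul, conjTranspose_mul, diagonal_conjTranspose, hstar, hΦ,
    ← diagonal_mul_mul_diagonal_s6]
  simp only [Matrix.mul_assoc]

lemma discountedAverage_second_moments (hV : IsUnit V)
    (hA : A.map ((↑) : ℝ → ℂ) = I • (V * diagonal (fun k => (ω k : ℂ)) * V⁻¹))
    (Γ : Matrix m m ℂ) {τ : ℝ} (hτ : 0 < τ) :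
    discountedAverage τ (fun t => (NormedSpace.exp (t • A)).map ((↑) : ℝ → ℂ) * Γ
        * (NormedSpace.exp (t • Aᵀ)).map ((↑) : ℝ → ℂ))
      = V * ((of fun j k => 1 / (1 - (ω j - ω k : ℝ) * τ * I)) ⊙ (V⁻¹ * Γ * V⁻¹ᴴ)) * Vᴴ := by
  have hint : ∀ j k, IntegrableOn
      (fun t : ℝ => Real.exp (-t / τ) • cexp ((ω j - ω k : ℝ) * t * I)) (Ioi 0) :=
    fun j k => integrableOn_exp_neg_div_smul_cexp hτ _
  simp_rw [map_ofReal_exp_smul_mul_mul_exp_smul_transpose hV hA, ← mulHadamardMulCLM_apply]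
  refine (ContinuousLinearMap.discountedAverage_comp _ ?_).trans ?_
  · exact Integrable.of_eval fun j => Integrable.of_eval (hint j)
  · rw [discountedAverage_of hint]
    congr 1
    ext j k
    exact discountedAverage_cexp_mul_I hτ _

end Diagonalizable

/-- If the real matrix `A` is diagonalized as `A = iVΩW` with `W = V⁻¹`
and real frequencies `ω₁, …, ω_n`, then for any complex `Γ`, the discounted averages
`(1/τ)∫₀^∞ e^{-t/τ} e^{tA} Γ e^{tAᵀ} dt` converge, as `τ → +∞`, to
`V (Φ_∞ ⊙ (WΓW*)) V*`, where `Φ_∞ = (δ_{ω_j ω_k})`. In particular, if the frequencies are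
pairwise distinct, then `Φ_∞ = I` and the limit equals `Σ_k V_k (WΓW*)_{kk} V_k*`. -/
theorem infinite_horizon_second_moments {n : ℕ}
    (A : Matrix (Fin n) (Fin n) ℝ) (V W : Matrix (Fin n) (Fin n) ℂ)
    (hV : IsUnit V.det) (hW : W = V⁻¹) (ω : Fin n → ℝ)
    (hA : A.map (Complex.ofReal · : ℝ → ℂ)
      = Complex.I • (V * Matrix.diagonal (fun k => (ω k : ℂ)) * W))
    (Γ : Matrix (Fin n) (Fin n) ℂ) :
    Filter.Tendsto
      (fun τ : ℝ => (1 / τ) • ∫ t in Set.Ioi (0:ℝ), Real.exp (-t / τ) •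
        ((NormedSpace.exp (t • A)).map (Complex.ofReal · : ℝ → ℂ) * Γ *
          (NormedSpace.exp (t • Aᵀ)).map (Complex.ofReal · : ℝ → ℂ)))
      Filter.atTop
      (nhds (V * (Matrix.hadamard
          (Matrix.of fun j k => if ω j = ω k then (1 : ℂ) else 0)
          (W * Γ * Wᴴ)) * Vᴴ))
    ∧ (Function.Injective ω →
        (Matrix.of fun j k => if ω j = ω k then (1 : ℂ) else 0)
          = (1 : Matrix (Fin n) (Fin n) ℂ) ∧
        V * (Matrix.hadamard
            (Matrix.of fun j k => if ω j = ω k then (1 : ℂ) else 0)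
            (W * Γ * Wᴴ)) * Vᴴ
          = ∑ k : Fin n, Matrix.of fun i j =>
              V i k * (W * Γ * Wᴴ) k k * star (V j k)) := by
  subst hW
  have hUnit : IsUnit V := (isUnit_iff_isUnit_det V).2 hV
  refine ⟨?_, fun hω => ?_⟩
  · have hΦ : Tendsto (fun τ : ℝ => of fun j k => 1 / (1 - (ω j - ω k : ℝ) * τ * I)) atTop
        (𝓝 (of fun j k => if ω j = ω k then (1 : ℂ) else 0)) :=
      tendsto_pi_nhds.2 fun j => tendsto_pi_nhds.2 fun k => by
        simpa only [of_apply, sub_eq_zero] using tendsto_one_div_one_sub_mul_I (ω j - ω k)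
    refine (((mulHadamardMulCLM V _ Vᴴ).continuous.tendsto _).comp hΦ).congr' ?_
    filter_upwards [eventually_gt_atTop 0] with τ hτ
    exact (discountedAverage_second_moments hUnit hA Γ hτ).symm
  · have hΦ : (of fun j k => if ω j = ω k then (1 : ℂ) else 0) = 1 := by
      ext j k
      simp only [of_apply, one_apply, hω.eq_iff]
    rw [hΦ, one_hadamard, mul_diagonal_mul_eq_sum]
    exact ⟨rfl, rfl⟩
end

section
/- Let Θ be an invertible real antisymmetric (n+ν)×(n+ν) matrix, 𝒜 := ΘR₀ with R₀ real symmetric (so 𝒜 is Hamiltonian), τ > 0, 𝒜_τ := 𝒜 − (1/(2τ))I, Σ a real symmetric matrix and 𝒞 a real matrix of compatible dimensions. For real symmetric 𝒫 and 𝒬, set P := 𝒫Θ^{-1} and Q := Θ𝒬. Then: (i) 𝒜_τ𝒫 + 𝒫𝒜_τᵀ + (1/τ)Σ = 0 holds if and only if [𝒜, P] = (1/τ)(P − ΣΘ^{-1}); and (ii) 𝒜_τᵀ𝒬 + 𝒬𝒜_τ + 𝒞ᵀ𝒞 = 0 holds if and only if [𝒜, Q] = Θ𝒞ᵀ𝒞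 − (1/τ)Q, where [X, Y] := XY − YX is the matrix commutator. -/
/-!
Hamiltonicity of `𝒜 = ΘR₀` means `𝒜ᵀ = -Θ⁻¹𝒜Θ`. Multiplying the first Lyapunov equation by `Θ⁻¹`
on the right therefore turns `𝒫𝒜ᵀ` into `-P𝒜`, and multiplying the second by `Θ` on the left turns
`Θ𝒜ᵀ𝒬` into `-𝒜Q`; the two shifts by `1/(2τ)` add up to `1/τ`. Since `Θ` is invertible, the
multiplied equations are equivalent to the original ones.
-/

open Matrix

namespace Matrix

variable {n K : Type*} [Fintype n] [CommRing K]

theorem transpose_skew_mul_symm {Θ R : Matrix n n K} (hΘ : Θᵀ = -Θ) (hR : Rᵀ = R) :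
    (Θ * R)ᵀ = -(R * Θ) := by
  rw [transpose_mul, hR, hΘ, Matrix.mul_neg]

theorem skew_mul_transpose_skew_mul_symm {Θ R : Matrix n n K} (hΘ : Θᵀ = -Θ) (hR : Rᵀ = R) :
    Θ * (Θ * R)ᵀ = -(Θ * R * Θ) := by
  rw [transpose_skew_mul_symm hΘ hR, Matrix.mul_neg, Matrix.mul_assoc]

variable [DecidableEq n]

theorem transpose_skew_mul_symm_mul_inv {Θ R : Matrix n n K} (hΘ : Θᵀ = -Θ) (hR : Rᵀ = R)
    (hdet : IsUnit Θ.det) : (Θ * R)ᵀ * Θ⁻¹ = -(Θ⁻¹ * (Θ * R)) := by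
  rw [transpose_skew_mul_symm hΘ hR, Matrix.neg_mul, Matrix.mul_assoc, mul_nonsing_inv _ hdet,
    Matrix.mul_one, ← Matrix.mul_assoc, nonsing_inv_mul _ hdet, Matrix.one_mul]

variable {Θ A : Matrix n n K}

theorem lyapunov_mul_inv_eq_lie (hA : Aᵀ * Θ⁻¹ = -(Θ⁻¹ * A)) (c : K) (X S : Matrix n n K) :
    ((A - c • 1) * X + X * (A - c • 1)ᵀ + (2 * c) • S) * Θ⁻¹
      = ⁅A, X * Θ⁻¹⁆ - (2 * c) • (X * Θ⁻¹ - S * Θ⁻¹) := by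
  have hX : X * Aᵀ * Θ⁻¹ = -(X * Θ⁻¹ * A) := by
    rw [Matrix.mul_assoc, hA, Matrix.mul_neg, Matrix.mul_assoc]
  simp only [Ring.lie_def, transpose_sub, transpose_smul, transpose_one, Matrix.sub_mul,
    Matrix.mul_sub, Matrix.add_mul, Matrix.smul_mul, Matrix.mul_smul, Matrix.one_mul,
    Matrix.mul_one, hX]
  rw [Matrix.mul_assoc A]
  module

theorem mul_lyapunov_eq_neg_lie (hA : Θ * Aᵀ = -(A * Θ)) (c : K) (Y D : Matrix n n K) :
    Θ * ((A - c • 1)ᵀ * Y + Y * (A - c • 1) + D)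
      = -(⁅A, Θ * Y⁆ - (Θ * D - (2 * c) • (Θ * Y))) := by
  have hY : Θ * (Aᵀ * Y) = -(A * (Θ * Y)) := by
    rw [← Matrix.mul_assoc, hA, Matrix.neg_mul, Matrix.mul_assoc]
  simp only [Ring.lie_def, transpose_sub, transpose_smul, transpose_one, Matrix.sub_mul,
    Matrix.mul_sub, Matrix.mul_add, Matrix.smul_mul, Matrix.mul_smul, Matrix.one_mul,
    Matrix.mul_one, hY, ← Matrix.mul_assoc]
  module

end Matrix

theorem lie_algebraic_ALEs_general {N q : ℕ}
    (Θ R₀ : Matrix (Fin N) (Fin N) ℝ)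
    (hΘ : Θᵀ = -Θ) (hΘinv : IsUnit Θ.det) (hR₀ : R₀ᵀ = R₀)
    (calA : Matrix (Fin N) (Fin N) ℝ) (hcalA : calA = Θ * R₀)
    (τ : ℝ)
    (calAτ : Matrix (Fin N) (Fin N) ℝ) (hcalAτ : calAτ = calA - (1 / (2 * τ)) • 1)
    (Sig : Matrix (Fin N) (Fin N) ℝ)
    (CC : Matrix (Fin q) (Fin N) ℝ)
    (calP calQ : Matrix (Fin N) (Fin N) ℝ)
    (P Q : Matrix (Fin N) (Fin N) ℝ) (hP : P = calP * Θ⁻¹) (hQ : Q = Θ * calQ) :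
    (calAτ * calP + calP * calAτᵀ + (1 / τ) • Sig = 0
      ↔ calA * P - P * calA = (1 / τ) • (P - Sig * Θ⁻¹))
    ∧ (calAτᵀ * calQ + calQ * calAτ + CCᵀ * CC = 0
      ↔ calA * Q - Q * calA = Θ * CCᵀ * CC - (1 / τ) • Q) := by
  subst hcalA hcalAτ hP hQ
  have hτ : (1 : ℝ) / τ = 2 * (1 / (2 * τ)) := by ring
  have hΘunit : IsUnit Θ := (isUnit_iff_isUnit_det Θ).mpr hΘinv
  rw [hτ, ← Ring.lie_def, ← Ring.lie_def, Matrix.mul_assoc Θ]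
  constructor
  · rw [← (isUnit_nonsing_inv_iff.mpr hΘunit).mul_left_eq_zero,
      lyapunov_mul_inv_eq_lie (transpose_skew_mul_symm_mul_inv hΘ hR₀ hΘinv),
      sub_eq_zero, smul_sub]
  · rw [← hΘunit.mul_right_eq_zero,
      mul_lyapunov_eq_neg_lie (skew_mul_transpose_skew_mul_symm hΘ hR₀), neg_eq_zero, sub_eq_zero]

/-- (Lie-algebraic form of the Lyapunov equations, Lemma 5 of the paper.)
For a Hamiltonian matrix `𝒜 = ΘR₀` and `𝒜_τ := 𝒜 − (1/(2τ))I`, with `P := 𝒫Θ⁻¹` and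
`Q := Θ𝒬`: (i) `𝒜_τ𝒫 + 𝒫𝒜_τᵀ + (1/τ)Σ = 0 ↔ [𝒜, P] = (1/τ)(P − ΣΘ⁻¹)`; and
(ii) `𝒜_τᵀ𝒬 + 𝒬𝒜_τ + 𝒞ᵀ𝒞 = 0 ↔ [𝒜, Q] = Θ𝒞ᵀ𝒞 − (1/τ)Q`. -/
theorem lie_algebraic_ALEs {N q : ℕ}
    (Θ R₀ : Matrix (Fin N) (Fin N) ℝ)
    (hΘ : Θᵀ = -Θ) (hΘinv : IsUnit Θ.det) (hR₀ : R₀ᵀ = R₀)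
    (calA : Matrix (Fin N) (Fin N) ℝ) (hcalA : calA = Θ * R₀)
    (τ : ℝ) (hτ : 0 < τ)
    (calAτ : Matrix (Fin N) (Fin N) ℝ) (hcalAτ : calAτ = calA - (1 / (2 * τ)) • 1)
    (Sig : Matrix (Fin N) (Fin N) ℝ) (hSig : Sigᵀ = Sig)
    (CC : Matrix (Fin q) (Fin N) ℝ)
    (calP calQ : Matrix (Fin N) (Fin N) ℝ) (hcalP : calPᵀ = calP) (hcalQ : calQᵀ = calQ)
    (P Q : Matrix (Fin N) (Fin N) ℝ) (hP : P = calP * Θ⁻¹) (hQ : Q = Θ * calQ) :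
    (calAτ * calP + calP * calAτᵀ + (1 / τ) • Sig = 0
      ↔ calA * P - P * calA = (1 / τ) • (P - Sig * Θ⁻¹))
    ∧ (calAτᵀ * calQ + calQ * calAτ + CCᵀ * CC = 0
      ↔ calA * Q - Q * calA = Θ * CCᵀ * CC - (1 / τ) • Q) :=
  lie_algebraic_ALEs_general Θ R₀ hΘ hΘinv hR₀ calA hcalA τ calAτ hcalAτ Sig CC calP calQ P Q hP hQ
end

section
/- Let 𝒜 be a real N×N matrix all of whose eigenvalues λ satisfy |Re λ| < 1/(2τ) for some τ > 0, and let Θ be an invertible real antisymmetric N×N matrix. Then the linear operator X ↦ X − τ(𝒜X − X𝒜) on ℝ^{N×N} is invertible, and the unique solution 𝒫 of the algebraic Lyapunov equation 𝒜_τ𝒫 + 𝒫𝒜_τᵀ + (1/τ)Σ = 0 with 𝒜_τ := 𝒜 − (1/(2τ))I, where 𝒜 is Hamiltonian with respect to Θ (Θ^{-1}𝒜 symmetric) and Σ is real symmetric, satisfies 𝒫Θ^{-1} = (ℐ − τ ad_𝒜)^{-1}(ΣΘ^{-1}), where ad_𝒜(X) := [𝒜, X] = 𝒜X − X𝒜 and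 ℐ is the identity operator on matrices. Similarly, the unique solution 𝒬 of 𝒜_τᵀ𝒬 + 𝒬𝒜_τ + 𝒞ᵀ𝒞 = 0 satisfies Θ𝒬 = τ(ℐ + τ ad_𝒜)^{-1}(Θ𝒞ᵀ𝒞). -/
/-!
If `B X = X D`, then `p(B) X = X p(D)` for every polynomial `p`; when the characteristic
polynomials of `B` and `D` are coprime, evaluating a Bézout identity `u χ_B + v χ_D = 1` at `B`
gives `X = v(B) X χ_D(D) = 0`. So `X ↦ BX − XD` is bijective as soon as `B` and `D` have no
common complex eigenvalue. The operators `ℐ ∓ τ ad_𝒜` and the two Lyapunov operators are of this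
form with `B`, `D` affine in `𝒜` or `𝒜ᵀ`, and the strip `|Re λ| < 1/(2τ)` keeps the two spectra
apart. The Lyapunov equation for `𝒫` reads `𝒫 − τ(𝒜𝒫 + 𝒫𝒜ᵀ) = Σ`, and the Hamiltonian relation
`𝒜ᵀΘ⁻¹ = −Θ⁻¹𝒜` turns it, after right multiplication by `Θ⁻¹`, into `(ℐ − τ ad_𝒜)(𝒫Θ⁻¹) = ΣΘ⁻¹`;
for `𝒬` one multiplies by `Θ` on the left and uses `Θ𝒜ᵀ = −𝒜Θ`.
-/

open Matrix Polynomial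

theorem Polynomial.aeval_mul_eq_mul_aeval {R A : Type*} [CommSemiring R] [Semiring A]
    [Algebra R A] {a b x : A} (h : a * x = x * b) (p : R[X]) :
    aeval a p * x = x * aeval b p := by
  induction p using Polynomial.induction_on' with
  | add p q hp hq => rw [map_add, map_add, add_mul, mul_add, hp, hq]
  | monomial k r =>
    have hk : a ^ k * x = x * b ^ k := (SemiconjBy.pow_right h.symm k).symm
    rw [aeval_monomial, aeval_monomial, mul_assoc, hk, ← mul_assoc, Algebra.commutes, mul_assoc]

theorem spectrum.algebraMap_add_smul_eq_image {𝕜 A : Type*} [Field 𝕜] [Ring A] [Algebra 𝕜 A]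
    (a : A) (c : 𝕜) {d : 𝕜} (hd : d ≠ 0) :
    spectrum 𝕜 (algebraMap 𝕜 A c + d • a) = (fun z => c + d * z) '' spectrum 𝕜 a := by
  rw [← spectrum.vadd_eq, show d • a = Units.mk0 d hd • a from rfl,
    spectrum.unit_smul_eq_smul, ← Set.image_smul, ← Set.image_vadd, Set.image_image]
  rfl

namespace Matrix

variable {n : Type*} [Fintype n] [DecidableEq n]

theorem eq_zero_of_mul_eq_mul_of_isCoprime_charpoly {R : Type*} [CommRing R]
    {B D X : Matrix n n R} (hBD : IsCoprime B.charpoly D.charpoly) (h : B * X = X * D) :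
    X = 0 := by
  obtain ⟨u, v, huv⟩ := hBD
  calc X = aeval B (u * B.charpoly + v * D.charpoly) * X := by rw [huv, map_one, one_mul]
    _ = aeval B v * (X * aeval D D.charpoly) := by
      rw [map_add, map_mul, map_mul, aeval_self_charpoly, mul_zero, zero_add, mul_assoc,
        aeval_mul_eq_mul_aeval h]
    _ = 0 := by rw [aeval_self_charpoly, mul_zero, mul_zero]

theorem spectrum_transpose {R : Type*} [CommRing R] (M : Matrix n n R) :
    spectrum R Mᵀ = spectrum R M := by
  ext r
  simp only [mem_spectrum_iff_not_isUnit_eval_charpoly, charpoly_transpose]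

section Complexification

variable {K L : Type*} [Field K] [Field L] [Algebra K L]

theorem map_algebraMap_add_smul (A : Matrix n n K) (c d : K) :
    (algebraMap K _ c + d • A).map (algebraMap K L) =
      algebraMap L _ (algebraMap K L c) + algebraMap K L d • A.map (algebraMap K L) := by
  ext i j
  simp only [map_apply, add_apply, smul_apply, algebraMap_matrix_apply, smul_eq_mul, map_add,
    map_mul]
  split_ifs <;> simp

theorem spectrum_map_algebraMap_add_smul (A : Matrix n n K) (c : K) {d : K} (hd : d ≠ 0) :
    spectrum L ((algebraMap K _ c + d • A).map (algebraMap K L)) =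
      (fun z => algebraMap K L c + algebraMap K L d * z) ''
        spectrum L (A.map (algebraMap K L)) := by
  rw [map_algebraMap_add_smul, spectrum.algebraMap_add_smul_eq_image _ _
    ((map_ne_zero (algebraMap K L)).2 hd)]

variable [IsAlgClosed L]

theorem isCoprime_charpoly_iff_disjoint_spectrum_map (B D : Matrix n n K) :
    IsCoprime B.charpoly D.charpoly ↔
      Disjoint (spectrum L (B.map (algebraMap K L))) (spectrum L (D.map (algebraMap K L))) := by
  rw [isCoprime_iff_aeval_ne_zero_of_isAlgClosed K L, Set.disjoint_left]
  simp only [mem_spectrum_iff_isRoot_charpoly, charpoly_map, IsRoot.def, eval_map_algebraMap]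
  exact forall_congr' fun a => by tauto

theorem bijective_mul_sub_mul_of_disjoint_spectrum_map {B D : Matrix n n K}
    (hBD : Disjoint (spectrum L (B.map (algebraMap K L))) (spectrum L (D.map (algebraMap K L)))) :
    Function.Bijective fun X : Matrix n n K => B * X - X * D := by
  have hinj : Function.Injective (LinearMap.mulLeft K B - LinearMap.mulRight K D) := by
    rw [← LinearMap.ker_eq_bot, LinearMap.ker_eq_bot']
    exact fun X hX => eq_zero_of_mul_eq_mul_of_isCoprime_charpoly
      ((isCoprime_charpoly_iff_disjoint_spectrum_map B D).2 hBD) (sub_eq_zero.1 hX)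
  exact ⟨hinj, LinearMap.injective_iff_surjective.1 hinj⟩

theorem bijective_sub_smul_commutator (A : Matrix n n K) (s : K)
    (h : ∀ z ∈ spectrum L (A.map (algebraMap K L)), ∀ w ∈ spectrum L (A.map (algebraMap K L)),
      algebraMap K L s * (z - w) ≠ 1) :
    Function.Bijective fun X : Matrix n n K => X - s • (A * X - X * A) := by
  rcases eq_or_ne s 0 with rfl | hs
  · simp only [zero_smul, sub_zero]
    exact Function.bijective_id
  have hform : (fun X : Matrix n n K => X - s • (A * X - X * A)) =
      fun X => (algebraMap K _ 1 + (-s) • A) * X - X * (algebraMap K _ 0 + (-s) • A) := by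
    funext X
    simp only [map_one, map_zero, zero_add, add_mul, one_mul, smul_mul_assoc, mul_smul_comm]
    module
  rw [hform]
  refine bijective_mul_sub_mul_of_disjoint_spectrum_map (L := L) ?_
  rw [spectrum_map_algebraMap_add_smul _ _ (neg_ne_zero.2 hs),
    spectrum_map_algebraMap_add_smul _ _ (neg_ne_zero.2 hs), Set.disjoint_left]
  rintro _ ⟨z, hz, rfl⟩ ⟨w, hw, hzw⟩
  refine h z hz w hw ?_
  simp only [map_one, map_zero, map_neg] at hzw
  linear_combination hzw

theorem bijective_lyapunov (A : Matrix n n K) (c : K)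
    (h : ∀ z ∈ spectrum L (A.map (algebraMap K L)), ∀ w ∈ spectrum L (A.map (algebraMap K L)),
      z + w ≠ 2 * algebraMap K L c) :
    Function.Bijective fun X : Matrix n n K => (A - c • 1) * X + X * (A - c • 1)ᵀ := by
  have hform : (fun X : Matrix n n K => (A - c • 1) * X + X * (A - c • 1)ᵀ) =
      fun X => (algebraMap K _ (-c) + (1 : K) • A) * X -
        X * (algebraMap K _ c + (-1 : K) • Aᵀ) := by
    funext X
    simp only [Algebra.algebraMap_eq_smul_one, transpose_sub, transpose_smul, transpose_one,
      sub_mul, add_mul, mul_sub, mul_add, smul_mul_assoc, mul_smul_comm, one_mul, mul_one]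
    module
  rw [hform]
  refine bijective_mul_sub_mul_of_disjoint_spectrum_map (L := L) ?_
  rw [spectrum_map_algebraMap_add_smul _ _ one_ne_zero,
    spectrum_map_algebraMap_add_smul _ _ (neg_ne_zero.2 one_ne_zero), transpose_map,
    spectrum_transpose, Set.disjoint_left]
  rintro _ ⟨z, hz, rfl⟩ ⟨w, hw, hzw⟩
  refine h z hz w hw ?_
  simp only [map_one, map_neg] at hzw
  linear_combination -hzw

end Complexification

variable {R : Type*} [CommRing R]

theorem transpose_mul_inv_eq_neg_inv_mul {Θ A : Matrix n n R} (hΘ : Θᵀ = -Θ)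
    (hdet : IsUnit Θ.det) (hA : (Θ⁻¹ * A)ᵀ = Θ⁻¹ * A) : Aᵀ * Θ⁻¹ = -(Θ⁻¹ * A) := by
  have hneg : (-Θ)⁻¹ = -Θ⁻¹ := inv_eq_left_inv (by rw [neg_mul_neg, nonsing_inv_mul Θ hdet])
  rwa [transpose_mul, transpose_nonsing_inv, hΘ, hneg, mul_neg, neg_eq_iff_eq_neg] at hA

theorem mul_transpose_eq_neg_mul {Θ A : Matrix n n R} (hΘ : Θᵀ = -Θ)
    (hdet : IsUnit Θ.det) (hA : (Θ⁻¹ * A)ᵀ = Θ⁻¹ * A) : Θ * Aᵀ = -(A * Θ) := by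
  have h := congrArg (Θ * · * Θ) (transpose_mul_inv_eq_neg_inv_mul hΘ hdet hA)
  simpa only [mul_assoc, nonsing_inv_mul Θ hdet, mul_neg, neg_mul, ← mul_assoc Θ Θ⁻¹,
    mul_nonsing_inv Θ hdet, one_mul, mul_one] using h

theorem mul_right_sub_smul_commutator_eq {A M P S : Matrix n n R} {τ : R}
    (hM : Aᵀ * M = -(M * A)) (hP : P - τ • (A * P + P * Aᵀ) = S) :
    P * M - τ • (A * (P * M) - P * M * A) = S * M := by
  rw [← hP, sub_mul, smul_mul_assoc, add_mul, mul_assoc P Aᵀ M, hM, mul_neg, ← sub_eq_add_neg,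
    mul_assoc A, mul_assoc P M A]

theorem mul_left_add_smul_commutator_eq {A M Q W : Matrix n n R} {τ : R}
    (hM : M * Aᵀ = -(A * M)) (hQ : Q - τ • (Aᵀ * Q + Q * A) = W) :
    M * Q + τ • (A * (M * Q) - M * Q * A) = M * W := by
  rw [← hQ]
  simp only [mul_sub, mul_add, mul_smul_comm, ← mul_assoc, hM, neg_mul]
  module

theorem sub_smul_mul_add_mul_eq_smul {K : Type*} [Field K] [NeZero (2 : K)]
    {A A' X W : Matrix n n K} {τ : K} (hτ : τ ≠ 0)
    (h : (A - (1 / (2 * τ)) • 1) * X + X * (A' - (1 / (2 * τ)) • 1) + W = 0) :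
    X - τ • (A * X + X * A') = τ • W := by
  rw [sub_mul, mul_sub, smul_mul_assoc, mul_smul_comm, one_mul, mul_one] at h
  have h' := congrArg ((-τ) • ·) h
  simp only [smul_add, smul_sub, smul_smul, smul_zero] at h'
  rw [← sub_eq_zero, ← h']
  match_scalars <;> field_simp; ring

end Matrix

theorem Function.Bijective.existsUnique_add_eq_zero {α M : Type*} [AddGroup M] {f : α → M}
    (hf : Function.Bijective f) (w : M) : ∃! x, f x + w = 0 := by
  simpa only [add_eq_zero_iff_eq_neg] using hf.existsUnique (-w)

theorem abs_mul_lt_half_of_abs_lt {s τ u : ℝ} (hτ : 0 < τ) (hs : |s| ≤ τ)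
    (hu : |u| < 1 / (2 * τ)) : |s * u| < 1 / 2 :=
  calc |s * u| = |s| * |u| := abs_mul s u
    _ ≤ τ * |u| := by gcongr
    _ < τ * (1 / (2 * τ)) := mul_lt_mul_of_pos_left hu hτ
    _ = 1 / 2 := by field_simp

namespace Complex

variable {z w : ℂ}

theorem ofReal_mul_sub_ne_one_of_abs_re_lt {s τ : ℝ} (hτ : 0 < τ) (hs : |s| ≤ τ)
    (hz : |z.re| < 1 / (2 * τ)) (hw : |w.re| < 1 / (2 * τ)) : (s : ℂ) * (z - w) ≠ 1 := by
  intro h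
  have hre : s * z.re - s * w.re = 1 := by simpa [mul_sub] using congrArg re h
  have hz' := abs_lt.1 (abs_mul_lt_half_of_abs_lt hτ hs hz)
  have hw' := abs_lt.1 (abs_mul_lt_half_of_abs_lt hτ hs hw)
  linarith

theorem add_ne_two_mul_of_abs_re_lt {c : ℝ} (hz : |z.re| < c) (hw : |w.re| < c) :
    z + w ≠ 2 * (c : ℂ) := by
  intro h
  have hre := congrArg re h
  simp only [add_re, mul_re, re_ofNat, im_ofNat, ofReal_re, ofReal_im, mul_zero, sub_zero] at hre
  linarith [abs_lt.1 hz, abs_lt.1 hw]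

end Complex

theorem resolvent_representation_of_Gramians_general {N q : ℕ}
    (calA : Matrix (Fin N) (Fin N) ℝ) (τ : ℝ) (hτ : 0 < τ)
    (hspec : ∀ μ ∈ spectrum ℂ (calA.map (Complex.ofReal · : ℝ → ℂ)),
      |μ.re| < 1 / (2 * τ))
    (Θ : Matrix (Fin N) (Fin N) ℝ) (hΘ : Θᵀ = -Θ) (hΘinv : IsUnit Θ.det)
    (hHam : (Θ⁻¹ * calA)ᵀ = Θ⁻¹ * calA)
    (calAτ : Matrix (Fin N) (Fin N) ℝ) (hcalAτ : calAτ = calA - (1 / (2 * τ)) • 1)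
    (Sig : Matrix (Fin N) (Fin N) ℝ)
    (CC : Matrix (Fin q) (Fin N) ℝ) :
    Function.Bijective
      (fun X : Matrix (Fin N) (Fin N) ℝ => X - τ • (calA * X - X * calA))
    ∧ Function.Bijective
      (fun X : Matrix (Fin N) (Fin N) ℝ => X + τ • (calA * X - X * calA))
    ∧ (∃! calP : Matrix (Fin N) (Fin N) ℝ,
        calAτ * calP + calP * calAτᵀ + (1 / τ) • Sig = 0)
    ∧ (∀ calP : Matrix (Fin N) (Fin N) ℝ,
        calAτ * calP + calP * calAτᵀ + (1 / τ) • Sig = 0 →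
        calP * Θ⁻¹ - τ • (calA * (calP * Θ⁻¹) - (calP * Θ⁻¹) * calA) = Sig * Θ⁻¹)
    ∧ (∃! calQ : Matrix (Fin N) (Fin N) ℝ,
        calAτᵀ * calQ + calQ * calAτ + CCᵀ * CC = 0)
    ∧ (∀ calQ : Matrix (Fin N) (Fin N) ℝ,
        calAτᵀ * calQ + calQ * calAτ + CCᵀ * CC = 0 →
        Θ * calQ + τ • (calA * (Θ * calQ) - (Θ * calQ) * calA) = τ • (Θ * CCᵀ * CC)) := by
  subst hcalAτ
  have hdiff (s : ℝ) (hs : |s| ≤ τ) : ∀ z ∈ spectrum ℂ (calA.map (algebraMap ℝ ℂ)),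
      ∀ w ∈ spectrum ℂ (calA.map (algebraMap ℝ ℂ)), (s : ℂ) * (z - w) ≠ 1 := fun z hz w hw =>
    Complex.ofReal_mul_sub_ne_one_of_abs_re_lt hτ hs (hspec z hz) (hspec w hw)
  have hsum : ∀ z ∈ spectrum ℂ (calA.map (algebraMap ℝ ℂ)), ∀ w ∈ spectrum ℂ
      (calA.map (algebraMap ℝ ℂ)), z + w ≠ 2 * ((1 / (2 * τ) : ℝ) : ℂ) := fun z hz w hw =>
    Complex.add_ne_two_mul_of_abs_re_lt (hspec z hz) (hspec w hw)
  have hT : (calA - (1 / (2 * τ)) • 1)ᵀ = calAᵀ - (1 / (2 * τ)) • 1 := by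
    rw [transpose_sub, transpose_smul, transpose_one]
  have hQbij := bijective_lyapunov (L := ℂ) calAᵀ (1 / (2 * τ))
    (by rw [transpose_map, spectrum_transpose]; exact hsum)
  rw [← hT, transpose_transpose] at hQbij
  refine ⟨bijective_sub_smul_commutator calA τ (hdiff τ (abs_of_pos hτ).le), ?_,
    (bijective_lyapunov calA _ hsum).existsUnique_add_eq_zero _, fun P hP => ?_,
    hQbij.existsUnique_add_eq_zero _, fun Q hQ => ?_⟩
  · simpa only [neg_smul, sub_neg_eq_add] using bijective_sub_smul_commutator calA (-τ)
      (hdiff (-τ) (by rw [abs_neg, abs_of_pos hτ]))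
  · rw [hT] at hP
    refine mul_right_sub_smul_commutator_eq (transpose_mul_inv_eq_neg_inv_mul hΘ hΘinv hHam) ?_
    rw [sub_smul_mul_add_mul_eq_smul hτ.ne' hP, smul_smul, mul_one_div_cancel hτ.ne', one_smul]
  · rw [hT] at hQ
    rw [Matrix.mul_assoc Θ CCᵀ CC, ← mul_smul_comm]
    exact mul_left_add_smul_commutator_eq (mul_transpose_eq_neg_mul hΘ hΘinv hHam)
      (sub_smul_mul_add_mul_eq_smul hτ.ne' hQ)

/-- (Resolvent representations of the Gramians.) If all eigenvalues `λ` of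
`𝒜` satisfy `|Re λ| < 1/(2τ)`, the operators `X ↦ X ∓ τ[𝒜, X]` are invertible; for a
Hamiltonian `𝒜` (with respect to `Θ`), the unique solution `𝒫` of
`𝒜_τ𝒫 + 𝒫𝒜_τᵀ + (1/τ)Σ = 0` satisfies `𝒫Θ⁻¹ = (ℐ − τ ad_𝒜)⁻¹(ΣΘ⁻¹)`, and the unique
solution `𝒬` of `𝒜_τᵀ𝒬 + 𝒬𝒜_τ + 𝒞ᵀ𝒞 = 0` satisfies `Θ𝒬 = τ(ℐ + τ ad_𝒜)⁻¹(Θ𝒞ᵀ𝒞)`. -/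
theorem resolvent_representation_of_Gramians {N q : ℕ}
    (calA : Matrix (Fin N) (Fin N) ℝ) (τ : ℝ) (hτ : 0 < τ)
    (hspec : ∀ μ ∈ spectrum ℂ (calA.map (Complex.ofReal · : ℝ → ℂ)),
      |μ.re| < 1 / (2 * τ))
    (Θ : Matrix (Fin N) (Fin N) ℝ) (hΘ : Θᵀ = -Θ) (hΘinv : IsUnit Θ.det)
    (hHam : (Θ⁻¹ * calA)ᵀ = Θ⁻¹ * calA)
    (calAτ : Matrix (Fin N) (Fin N) ℝ) (hcalAτ : calAτ = calA - (1 / (2 * τ)) • 1)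
    (Sig : Matrix (Fin N) (Fin N) ℝ) (hSig : Sigᵀ = Sig)
    (CC : Matrix (Fin q) (Fin N) ℝ) :
    Function.Bijective
      (fun X : Matrix (Fin N) (Fin N) ℝ => X - τ • (calA * X - X * calA))
    ∧ Function.Bijective
      (fun X : Matrix (Fin N) (Fin N) ℝ => X + τ • (calA * X - X * calA))
    ∧ (∃! calP : Matrix (Fin N) (Fin N) ℝ,
        calAτ * calP + calP * calAτᵀ + (1 / τ) • Sig = 0)
    ∧ (∀ calP : Matrix (Fin N) (Fin N) ℝ,
        calAτ * calP + calP * calAτᵀ + (1 / τ) • Sig = 0 →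
        calP * Θ⁻¹ - τ • (calA * (calP * Θ⁻¹) - (calP * Θ⁻¹) * calA) = Sig * Θ⁻¹)
    ∧ (∃! calQ : Matrix (Fin N) (Fin N) ℝ,
        calAτᵀ * calQ + calQ * calAτ + CCᵀ * CC = 0)
    ∧ (∀ calQ : Matrix (Fin N) (Fin N) ℝ,
        calAτᵀ * calQ + calQ * calAτ + CCᵀ * CC = 0 →
        Θ * calQ + τ • (calA * (Θ * calQ) - (Θ * calQ) * calA) = τ • (Θ * CCᵀ * CC)) :=
  resolvent_representation_of_Gramians_general calA τ hτ hspec Θ hΘ hΘinv hHam calAτ hcalAτ Sig CC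
end

section
/- Let Θ = diag(Θ₁, Θ₂) with Θ₁ ∈ 𝔸ₙ, Θ₂ ∈ 𝔸_ν invertible, 𝒜 = [[2Θ₁K, 2Θ₁L],[2Θ₂Lᵀ, 2Θ₂M]] with K ∈ 𝕊ₙ, M ∈ 𝕊_ν, L ∈ ℝ^{n×ν}, and let P, Q be real (n+ν)×(n+ν) matrices satisfying [𝒜, P] = (1/τ)(P − ΣΘ^{-1}) and [𝒜, Q] = Θ𝒞ᵀ𝒞 − (1/τ)Q for some Σ ∈ 𝕊_{n+ν}, real matrix 𝒞 and τ > 0. Let D := [Q, P] with blocks D_{jk} conformal with the partition (n, ν), and suppose D₂₂ = 0. Then (1/2)((1/τ)[ΣΘ^{-1}, Q]₁₂ + [Θ𝒞ᵀ𝒞, P]₁₂) + D₁₁Θ₁L − Θ₁KD₁₂ + D₁₂Θ₂M = 0, where [·,·]₁₂ denotes the (1,2) block of the commutator. Moreover, if in addition D₁₂ = (λ/2)ΠLP₂₂ with Π ≻ 0, λ > 0 and P₂₂ (the (2,2) block of P) invertible, then L = (2/λ)Π^{-1}D₁₂P₂₂^{-1}. -/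
/-!
By the Jacobi identity, the two Lie-algebraic Lyapunov equations give
`[𝒜, [Q, P]] = (1/τ)[ΣΘ⁻¹, Q] + [Θ𝒞ᵀ𝒞, P]`. Reading off the `(1,2)` block of the left-hand side
from the block form of `𝒜`, with `D₂₂ = 0`, yields the first relation. The formula for `L` is
obtained by cancelling the invertible factors `Π` and `P₂₂` in `D₁₂ = (λ/2)ΠLP₂₂`.
-/

open Matrix

theorem lie_lie_eq_smul_lie_add_lie {R A : Type*} [CommRing R] [Ring A] [Algebra R A]
    {X P Q E F : A} {t : R} (hP : ⁅X, P⁆ = t • (P - F)) (hQ : ⁅X, Q⁆ = E - t • Q) :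
    ⁅X, ⁅Q, P⁆⁆ = t • ⁅F, Q⁆ + ⁅E, P⁆ :=
  calc ⁅X, ⁅Q, P⁆⁆ = ⁅⁅X, Q⁆, P⁆ + ⁅Q, ⁅X, P⁆⁆ := by simp only [Ring.lie_def]; noncomm_ring
    _ = ⁅E - t • Q, P⁆ + ⁅Q, t • (P - F)⁆ := by rw [hP, hQ]
    _ = t • ⁅F, Q⁆ + ⁅E, P⁆ := by
      simp only [Ring.lie_def, sub_mul, mul_sub, smul_mul_assoc, mul_smul_comm, smul_sub]
      abel

theorem toBlocks₁₂_lie_fromBlocks {l m α : Type*} [Fintype l] [Fintype m] [Ring α]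
    (A₁₁ : Matrix l l α) (A₁₂ : Matrix l m α) (A₂₁ : Matrix m l α) (A₂₂ : Matrix m m α)
    (D : Matrix (l ⊕ m) (l ⊕ m) α) :
    ⁅fromBlocks A₁₁ A₁₂ A₂₁ A₂₂, D⁆.toBlocks₁₂
      = A₁₁ * D.toBlocks₁₂ + A₁₂ * D.toBlocks₂₂ - (D.toBlocks₁₁ * A₁₂ + D.toBlocks₁₂ * A₂₂) := by
  conv_lhs => rw [← fromBlocks_toBlocks D, Ring.lie_def, fromBlocks_multiply, fromBlocks_multiply]
  rfl

theorem eq_smul_inv_mul_mul_inv_of_eq_smul_mul_mul {l m K : Type*} [Fintype l] [DecidableEq l]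
    [Fintype m] [DecidableEq m] [Field K] {A : Matrix l l K} {B : Matrix m m K} {L X : Matrix l m K}
    {c : K} (hA : IsUnit A.det) (hB : IsUnit B.det) (hc : c ≠ 0) (hX : X = c • (A * L * B)) :
    L = c⁻¹ • (A⁻¹ * X * B⁻¹) := by
  rw [hX, Matrix.mul_smul, Matrix.smul_mul, smul_smul, inv_mul_cancel₀ hc, one_smul,
    ← Matrix.mul_assoc, nonsing_inv_mul_cancel_left A L hA, mul_nonsing_inv_cancel_right B L hB]

theorem lemma6_block12_relation_general {n ν q : ℕ}
    (Θ₁ K : Matrix (Fin n) (Fin n) ℝ) (Θ₂ M : Matrix (Fin ν) (Fin ν) ℝ)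
    (L : Matrix (Fin n) (Fin ν) ℝ)
    (Θ calA : Matrix (Fin n ⊕ Fin ν) (Fin n ⊕ Fin ν) ℝ)
    (hcalA : calA = fromBlocks
      ((2:ℝ) • (Θ₁ * K)) ((2:ℝ) • (Θ₁ * L)) ((2:ℝ) • (Θ₂ * Lᵀ)) ((2:ℝ) • (Θ₂ * M)))
    (P Q : Matrix (Fin n ⊕ Fin ν) (Fin n ⊕ Fin ν) ℝ)
    (Sig : Matrix (Fin n ⊕ Fin ν) (Fin n ⊕ Fin ν) ℝ)
    (CC : Matrix (Fin q) (Fin n ⊕ Fin ν) ℝ) (τ : ℝ)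
    (hPeq : calA * P - P * calA = (1 / τ) • (P - Sig * Θ⁻¹))
    (hQeq : calA * Q - Q * calA = Θ * CCᵀ * CC - (1 / τ) • Q)
    (D : Matrix (Fin n ⊕ Fin ν) (Fin n ⊕ Fin ν) ℝ) (hD : D = Q * P - P * Q)
    (hD22 : D.toBlocks₂₂ = 0) :
    ((1 / 2 : ℝ) • ((1 / τ) • ((Sig * Θ⁻¹) * Q - Q * (Sig * Θ⁻¹)).toBlocks₁₂
          + ((Θ * CCᵀ * CC) * P - P * (Θ * CCᵀ * CC)).toBlocks₁₂)
        + D.toBlocks₁₁ * Θ₁ * L - Θ₁ * K * D.toBlocks₁₂ + D.toBlocks₁₂ * Θ₂ * M = 0)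
    ∧ (∀ (Pim : Matrix (Fin n) (Fin n) ℝ) (lam : ℝ),
        Pim.PosDef → 0 < lam → IsUnit (P.toBlocks₂₂).det →
        D.toBlocks₁₂ = (lam / 2) • (Pim * L * P.toBlocks₂₂) →
        L = (2 / lam) • (Pim⁻¹ * D.toBlocks₁₂ * (P.toBlocks₂₂)⁻¹)) := by
  have hJacobi : ⁅calA, D⁆ = (1 / τ) • ⁅Sig * Θ⁻¹, Q⁆ + ⁅Θ * CCᵀ * CC, P⁆ := by
    rw [hD, ← Ring.lie_def]
    exact lie_lie_eq_smul_lie_add_lie (by rwa [Ring.lie_def]) (by rwa [Ring.lie_def])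
  refine ⟨?_, fun Pim lam hPim hlam hP22 hD12 => ?_⟩
  · have h12 : (1 / τ) • ⁅Sig * Θ⁻¹, Q⁆.toBlocks₁₂ + ⁅Θ * CCᵀ * CC, P⁆.toBlocks₁₂
        = ⁅calA, D⁆.toBlocks₁₂ := congrArg toBlocks₁₂ hJacobi.symm
    rw [hcalA, toBlocks₁₂_lie_fromBlocks, hD22, Ring.lie_def, Ring.lie_def] at h12
    rw [h12]
    simp only [Matrix.mul_zero, add_zero, Matrix.smul_mul, Matrix.mul_smul, Matrix.mul_assoc]
    module
  · rw [← inv_div]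
    exact eq_smul_inv_mul_mul_inv_of_eq_smul_mul_mul
      ((isUnit_iff_isUnit_det Pim).mp hPim.isUnit) hP22 (by positivity) hD12

/-- (Lemma 6 of the paper.) For the plant-observer Hamiltonian dynamics
matrix `𝒜` and Hamiltonian-form Gramians `P`, `Q` satisfying the Lie-algebraic Lyapunov
equations, with `D := [Q, P]` and `D₂₂ = 0`, the `(1,2)` block of the Jacobi-identity
relation holds; moreover, if `D₁₂ = (λ/2)ΠLP₂₂` with `Π ≻ 0`, `λ > 0` and `P₂₂`
invertible, then `L = (2/λ)Π⁻¹D₁₂P₂₂⁻¹`. -/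
theorem lemma6_block12_relation {n ν q : ℕ}
    (Θ₁ K : Matrix (Fin n) (Fin n) ℝ) (Θ₂ M : Matrix (Fin ν) (Fin ν) ℝ)
    (L : Matrix (Fin n) (Fin ν) ℝ)
    (hΘ₁ : Θ₁ᵀ = -Θ₁) (hΘ₁inv : IsUnit Θ₁.det)
    (hΘ₂ : Θ₂ᵀ = -Θ₂) (hΘ₂inv : IsUnit Θ₂.det)
    (hK : Kᵀ = K) (hM : Mᵀ = M)
    (Θ calA : Matrix (Fin n ⊕ Fin ν) (Fin n ⊕ Fin ν) ℝ)
    (hΘ : Θ = fromBlocks Θ₁ 0 0 Θ₂)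
    (hcalA : calA = fromBlocks
      ((2:ℝ) • (Θ₁ * K)) ((2:ℝ) • (Θ₁ * L)) ((2:ℝ) • (Θ₂ * Lᵀ)) ((2:ℝ) • (Θ₂ * M)))
    (P Q : Matrix (Fin n ⊕ Fin ν) (Fin n ⊕ Fin ν) ℝ)
    (Sig : Matrix (Fin n ⊕ Fin ν) (Fin n ⊕ Fin ν) ℝ) (hSig : Sigᵀ = Sig)
    (CC : Matrix (Fin q) (Fin n ⊕ Fin ν) ℝ) (τ : ℝ) (hτ : 0 < τ)
    (hPeq : calA * P - P * calA = (1 / τ) • (P - Sig * Θ⁻¹))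
    (hQeq : calA * Q - Q * calA = Θ * CCᵀ * CC - (1 / τ) • Q)
    (D : Matrix (Fin n ⊕ Fin ν) (Fin n ⊕ Fin ν) ℝ) (hD : D = Q * P - P * Q)
    (hD22 : D.toBlocks₂₂ = 0) :
    ((1 / 2 : ℝ) • ((1 / τ) • ((Sig * Θ⁻¹) * Q - Q * (Sig * Θ⁻¹)).toBlocks₁₂
          + ((Θ * CCᵀ * CC) * P - P * (Θ * CCᵀ * CC)).toBlocks₁₂)
        + D.toBlocks₁₁ * Θ₁ * L - Θ₁ * K * D.toBlocks₁₂ + D.toBlocks₁₂ * Θ₂ * M = 0)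
    ∧ (∀ (Pim : Matrix (Fin n) (Fin n) ℝ) (lam : ℝ),
        Pim.PosDef → 0 < lam → IsUnit (P.toBlocks₂₂).det →
        D.toBlocks₁₂ = (lam / 2) • (Pim * L * P.toBlocks₂₂) →
        L = (2 / lam) • (Pim⁻¹ * D.toBlocks₁₂ * (P.toBlocks₂₂)⁻¹)) :=
  lemma6_block12_relation_general Θ₁ K Θ₂ M L Θ calA hcalA P Q Sig CC τ hPeq hQeq D hD hD22
end

section
/- Let Θ₀ ∈ 𝔸ₙ be invertible, S₀ ∈ ℝ^{n×n} invertible, K, M ∈ 𝕊ₙ, L ∈ ℝ^{n×n}, and set S := [S₀, −S₀] ∈ ℝ^{n×2n} and 𝒜 := [[2Θ₀K, 2Θ₀L],[2Θ₀Lᵀ, 2Θ₀M]]. Then there exists a matrix Â ∈ ℝ^{n×n} with S𝒜 = ÂS if and only if K = M and L = Lᵀ. In that case Â is unique and equals Â = 2Θ̂R̂, where Θ̂ := 2S₀Θ₀S₀ᵀ and R̂ := (1/2)S₀^{-ᵀ}(K − L)S₀^{-1} is real symmetric. -/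
open Matrix

/-! Block multiplication turns `S𝒜 = ÂS` into the pair `ÂS₀ = 2S₀Θ₀(K - Lᵀ)`,
`ÂS₀ = 2S₀Θ₀(M - L)`. As `S₀Θ₀` is invertible, some `Â` solves both iff `K - Lᵀ = M - L`;
adding the transpose of this equation (`K`, `M` symmetric) gives `K = M` and `L = Lᵀ`.
The solution is then `Â = 2S₀Θ₀(K - L)S₀⁻¹`, which equals `2Θ̂R̂` because `S₀ᵀS₀⁻ᵀ = 1`. -/

variable {l m R : Type*}

theorem fromCols_neg_mul_fromBlocks_eq_mul_fromCols_neg_iff [Fintype l] [Fintype m] [Ring R]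
    (P : Matrix l m R) (A B C D : Matrix m m R) (X : Matrix l l R) :
    fromCols P (-P) * fromBlocks A B C D = X * fromCols P (-P) ↔
      P * (A - C) = X * P ∧ P * (D - B) = X * P := by
  rw [fromCols_mul_fromBlocks, mul_fromCols, fromCols_ext_iff, Matrix.mul_neg, Matrix.neg_mul,
    Matrix.neg_mul, ← sub_eq_add_neg, ← sub_eq_add_neg, ← neg_eq_iff_eq_neg, neg_sub,
    ← Matrix.mul_sub, ← Matrix.mul_sub]

theorem eq_and_eq_transpose_of_sub_transpose_eq_sub [AddCommGroup R] [IsAddTorsionFree R]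
    {K M L : Matrix m m R} (hK : Kᵀ = K) (hM : Mᵀ = M) (h : K - Lᵀ = M - L) :
    K = M ∧ L = Lᵀ := by
  have hT : K - L = M - Lᵀ := by
    simpa only [transpose_sub, transpose_transpose, hK, hM] using congrArg transpose h
  have h2 : 2 • (L - Lᵀ) = 0 := calc
    2 • (L - Lᵀ) = (M - Lᵀ) - (K - L) - ((M - L) - (K - Lᵀ)) := by abel
    _ = 0 := by rw [← hT, ← h, sub_self, sub_self, sub_zero]
  have hL : L = Lᵀ := by
    ext i j
    simpa [sub_eq_zero] using congr($h2 i j)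
  exact ⟨by rwa [← hL, sub_left_inj] at h, hL⟩

theorem mul_mul_transpose_mul_inv_transpose_mul_mul_inv [Fintype m] [DecidableEq m] [CommRing R]
    {P : Matrix m m R} (hP : IsUnit P.det) (T N : Matrix m m R) :
    P * T * Pᵀ * ((P⁻¹)ᵀ * N * P⁻¹) = P * T * N * P⁻¹ := by
  have hPT : Pᵀ * (P⁻¹)ᵀ = 1 := by rw [← transpose_mul, nonsing_inv_mul _ hP, transpose_one]
  rw [← Matrix.mul_assoc, ← Matrix.mul_assoc, Matrix.mul_assoc (P * T) Pᵀ, hPT, Matrix.mul_one]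

theorem autonomous_error_dynamics_iff_general {n : ℕ}
    (Θ₀ S₀ K M L : Matrix (Fin n) (Fin n) ℝ)
    (hΘ₀inv : IsUnit Θ₀.det) (hS₀inv : IsUnit S₀.det)
    (hK : Kᵀ = K) (hM : Mᵀ = M)
    (S : Matrix (Fin n) (Fin n ⊕ Fin n) ℝ) (hS : S = fromCols S₀ (-S₀))
    (calA : Matrix (Fin n ⊕ Fin n) (Fin n ⊕ Fin n) ℝ)
    (hcalA : calA = fromBlocks
      ((2:ℝ) • (Θ₀ * K)) ((2:ℝ) • (Θ₀ * L)) ((2:ℝ) • (Θ₀ * Lᵀ)) ((2:ℝ) • (Θ₀ * M))) :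
    ((∃ Ahat : Matrix (Fin n) (Fin n) ℝ, S * calA = Ahat * S) ↔ (K = M ∧ L = Lᵀ))
    ∧ (K = M → L = Lᵀ →
        (((1 / 2 : ℝ) • ((S₀⁻¹)ᵀ * (K - L) * S₀⁻¹))ᵀ
            = (1 / 2 : ℝ) • ((S₀⁻¹)ᵀ * (K - L) * S₀⁻¹)
          ∧ ∀ Ahat : Matrix (Fin n) (Fin n) ℝ, S * calA = Ahat * S →
              Ahat = (2:ℝ) • (((2:ℝ) • (S₀ * Θ₀ * S₀ᵀ)) *
                ((1 / 2 : ℝ) • ((S₀⁻¹)ᵀ * (K - L) * S₀⁻¹))))) := by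
  subst hS hcalA
  set G := (2:ℝ) • (S₀ * Θ₀) with hG_def
  have hG : IsUnit G := by
    rw [isUnit_iff_isUnit_det, det_smul, det_mul]
    exact (IsUnit.pow _ (isUnit_iff_ne_zero.mpr two_ne_zero)).mul (hS₀inv.mul hΘ₀inv)
  have hG_mul (X Y : Matrix (Fin n) (Fin n) ℝ) :
      S₀ * ((2:ℝ) • (Θ₀ * X) - (2:ℝ) • (Θ₀ * Y)) = G * (X - Y) := by
    rw [← smul_sub, ← Matrix.mul_sub, Matrix.mul_smul, ← Matrix.mul_assoc, ← Matrix.smul_mul]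
  have key (Ahat : Matrix (Fin n) (Fin n) ℝ) :
      fromCols S₀ (-S₀) * fromBlocks ((2:ℝ) • (Θ₀ * K)) ((2:ℝ) • (Θ₀ * L))
          ((2:ℝ) • (Θ₀ * Lᵀ)) ((2:ℝ) • (Θ₀ * M)) = Ahat * fromCols S₀ (-S₀) ↔
        G * (K - Lᵀ) = Ahat * S₀ ∧ G * (M - L) = Ahat * S₀ := by
    rw [fromCols_neg_mul_fromBlocks_eq_mul_fromCols_neg_iff, hG_mul, hG_mul]
  refine ⟨⟨fun ⟨Ahat, h⟩ => ?_, fun ⟨hKM, hL⟩ => ⟨G * (K - L) * S₀⁻¹, (key _).mpr ?_⟩⟩,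
    fun hKM hL => ⟨?_, fun Ahat h => ?_⟩⟩
  · obtain ⟨h1, h2⟩ := (key Ahat).mp h
    exact eq_and_eq_transpose_of_sub_transpose_eq_sub hK hM (hG.mul_left_cancel (h1.trans h2.symm))
  · rw [nonsing_inv_mul_cancel_right _ _ hS₀inv, ← hL, ← hKM]
    exact ⟨rfl, rfl⟩
  · rw [transpose_smul, transpose_mul, transpose_mul, transpose_transpose, transpose_sub, hK, ← hL,
      Matrix.mul_assoc]
  · calc Ahat = G * (K - Lᵀ) * S₀⁻¹ := by
          rw [((key Ahat).mp h).1, mul_nonsing_inv_cancel_right _ _ hS₀inv]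
      _ = (2:ℝ) • (S₀ * Θ₀ * S₀ᵀ * ((S₀⁻¹)ᵀ * (K - L) * S₀⁻¹)) := by
        rw [mul_mul_transpose_mul_inv_transpose_mul_mul_inv hS₀inv, ← hL, hG_def, Matrix.smul_mul,
          Matrix.smul_mul]
      _ = _ := by
        simp only [Matrix.smul_mul, Matrix.mul_smul, smul_smul]
        norm_num

/-- (Lemma 7 of the paper.) With `S := [S₀, −S₀]` and the plant-observer
dynamics matrix `𝒜`, there exists `Â` with `S𝒜 = ÂS` iff `K = M` and `L = Lᵀ`; in that
case `Â` is unique and equals `2Θ̂R̂` with `Θ̂ := 2S₀Θ₀S₀ᵀ` and the real symmetric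
`R̂ := (1/2)S₀⁻ᵀ(K − L)S₀⁻¹`. -/
theorem autonomous_error_dynamics_iff {n : ℕ}
    (Θ₀ S₀ K M L : Matrix (Fin n) (Fin n) ℝ)
    (hΘ₀ : Θ₀ᵀ = -Θ₀) (hΘ₀inv : IsUnit Θ₀.det) (hS₀inv : IsUnit S₀.det)
    (hK : Kᵀ = K) (hM : Mᵀ = M)
    (S : Matrix (Fin n) (Fin n ⊕ Fin n) ℝ) (hS : S = fromCols S₀ (-S₀))
    (calA : Matrix (Fin n ⊕ Fin n) (Fin n ⊕ Fin n) ℝ)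
    (hcalA : calA = fromBlocks
      ((2:ℝ) • (Θ₀ * K)) ((2:ℝ) • (Θ₀ * L)) ((2:ℝ) • (Θ₀ * Lᵀ)) ((2:ℝ) • (Θ₀ * M))) :
    ((∃ Ahat : Matrix (Fin n) (Fin n) ℝ, S * calA = Ahat * S) ↔ (K = M ∧ L = Lᵀ))
    ∧ (K = M → L = Lᵀ →
        (((1 / 2 : ℝ) • ((S₀⁻¹)ᵀ * (K - L) * S₀⁻¹))ᵀ
            = (1 / 2 : ℝ) • ((S₀⁻¹)ᵀ * (K - L) * S₀⁻¹)
          ∧ ∀ Ahat : Matrix (Fin n) (Fin n) ℝ, S * calA = Ahat * S →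
              Ahat = (2:ℝ) • (((2:ℝ) • (S₀ * Θ₀ * S₀ᵀ)) *
                ((1 / 2 : ℝ) • ((S₀⁻¹)ᵀ * (K - L) * S₀⁻¹))))) :=
  autonomous_error_dynamics_iff_general Θ₀ S₀ K M L hΘ₀inv hS₀inv hK hM S hS calA hcalA
end
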